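/- arXiv:2507.06437 — 9 statements merged into one kernel-verified Lean document; each statement's English description precedes it below -/
import Mathlib

section
/- Let G be a connected block graph. Then for any two vertices u and v of G there is a unique path of minimal length in G connecting u and v. -/
open MvPolynomial SimpleGraph
open scoped Classical

/-- A graph is a block graph if every two distinct vertices joined by two
internally-vertex-disjoint paths are adjacent; equivalently, every
2-connected component of the graph is a complete subgraph. -/
def IsBlockGraph {V : Type*} (G : SimpleGraph V) : Prop :=
  ∀ u v : V, u ≠ v →
    (∃ p q : G.Walk u v, p.IsPath ∧ q.IsPath ∧ p ≠ q ∧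
      ∀ w, w ∈ p.support → w ∈ q.support → w = u ∨ w = v) →
    G.Adj u v

private lemma walk_eq_nil_of_length_zero {V : Type*} {G : SimpleGraph V} {u v : V}
    (p : G.Walk u v) (h : p.length = 0) :
    p = (SimpleGraph.Walk.eq_of_length_eq_zero h ▸ SimpleGraph.Walk.nil : G.Walk u v) := by
  cases p with
  | nil => rfl
  | cons h' p' => simp at h

private lemma shortest_unique {V : Type*} [Fintype V] (G : SimpleGraph V)
    (hconn : G.Connected) (hblock : IsBlockGraph G) :
    ∀ n : ℕ, ∀ u v : V, G.dist u v = n → ∀ p q : G.Walk u v,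
      p.length = n → q.length = n → p = q := by
  intro n
  induction n using Nat.strong_induction_on with
  | _ n IH =>
    intro u v hdist p q hp hq
    have hpp : p.IsPath := p.isPath_of_length_eq_dist (by rw [hp, hdist])
    have hqp : q.IsPath := q.isPath_of_length_eq_dist (by rw [hq, hdist])
    by_cases huv : u = v
    · subst huv
      have h0 : n = 0 := by rw [← hdist, SimpleGraph.dist_self]
      have hp0 := walk_eq_nil_of_length_zero p (by rw [hp, h0])
      have hq0 := walk_eq_nil_of_length_zero q (by rw [hq, h0])
      simp only at hp0 hq0
      rw [hp0, hq0]
    · by_cases hx : ∃ x, x ∈ p.support ∧ x ∈ q.support ∧ x ≠ u ∧ x ≠ v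
      · obtain ⟨x, hxp, hxq, hxu, hxv⟩ := hx
        have hspec_p := p.take_spec hxp
        have hspec_q := q.take_spec hxq
        -- lengths
        have hlp : (p.takeUntil x hxp).length + (p.dropUntil x hxp).length = n := by
          have := congrArg SimpleGraph.Walk.length hspec_p
          rwa [SimpleGraph.Walk.length_append, hp] at this
        have hlq : (q.takeUntil x hxq).length + (q.dropUntil x hxq).length = n := by
          have := congrArg SimpleGraph.Walk.length hspec_q
          rwa [SimpleGraph.Walk.length_append, hq] at this
        have h1 : G.dist u x ≤ (p.takeUntil x hxp).length := SimpleGraph.dist_le _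
        have h2 : G.dist x v ≤ (p.dropUntil x hxp).length := SimpleGraph.dist_le _
        have h3 : G.dist u x ≤ (q.takeUntil x hxq).length := SimpleGraph.dist_le _
        have h4 : G.dist x v ≤ (q.dropUntil x hxq).length := SimpleGraph.dist_le _
        have htri : n ≤ G.dist u x + G.dist x v := by
          rw [← hdist]; exact hconn.dist_triangle
        have hta : G.dist u x = (p.takeUntil x hxp).length := by omega
        have hda : G.dist x v = (p.dropUntil x hxp).length := by omega
        have htb : G.dist u x = (q.takeUntil x hxq).length := by omega
        have hdb : G.dist x v = (q.dropUntil x hxq).length := by omega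
        -- positivity
        have hpos1 : 0 < G.dist u x := hconn.pos_dist_of_ne (fun h => hxu h.symm)
        have hpos2 : 0 < G.dist x v := hconn.pos_dist_of_ne hxv
        have hlt1 : G.dist u x < n := by omega
        have hlt2 : G.dist x v < n := by omega
        have e1 : p.takeUntil x hxp = q.takeUntil x hxq :=
          IH _ hlt1 u x rfl _ _ hta.symm htb.symm
        have e2 : p.dropUntil x hxp = q.dropUntil x hxq :=
          IH _ hlt2 x v rfl _ _ hda.symm hdb.symm
        rw [← hspec_p, ← hspec_q, e1, e2]
      · push_neg at hx
        by_contra hpq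
        have hadj : G.Adj u v := by
          refine hblock u v huv ⟨p, q, hpp, hqp, hpq, ?_⟩
          intro w hwp hwq
          by_contra hw
          push_neg at hw
          exact hw.2 (hx w hwp hwq hw.1)
        have hn1 : n = 1 := by
          rw [← hdist, SimpleGraph.dist_eq_one_iff_adj]; exact hadj
        apply hpq
        cases p with
        | nil => exact absurd rfl huv
        | cons ha p' =>
          cases q with
          | nil => exact absurd rfl huv
          | cons hb q' =>
            simp only [SimpleGraph.Walk.length_cons, hn1] at hp hq
            have hp'0 : p'.length = 0 := by omega
            have hq'0 : q'.length = 0 := by omega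
            have hav := SimpleGraph.Walk.eq_of_length_eq_zero hp'0
            have hbv := SimpleGraph.Walk.eq_of_length_eq_zero hq'0
            subst hav
            have := SimpleGraph.Walk.eq_of_length_eq_zero hq'0
            subst this
            rw [walk_eq_nil_of_length_zero p' hp'0, walk_eq_nil_of_length_zero q' hq'0]

/-- in a connected block graph, any two vertices are joined by a
unique path of minimal length. -/
theorem existsUnique_shortest_path {V : Type*} [Fintype V] (G : SimpleGraph V)
    (hconn : G.Connected) (hblock : IsBlockGraph G) (u v : V) :
    ∃! p : G.Walk u v, p.IsPath ∧ p.length = G.dist u v := by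
  obtain ⟨p, hp⟩ := hconn.exists_walk_length_eq_dist u v
  refine ⟨p, ⟨p.isPath_of_length_eq_dist hp, hp⟩, ?_⟩
  intro q ⟨hq1, hq2⟩
  exact shortest_unique G hconn hblock (G.dist u v) u v rfl q p hq2 hp
end

section
/- Let G be a block graph, let P be a shortest path in G, and let C be a maximal clique of G. Then P and C have at most one edge in common, i.e., |E(P) ∩ E(C)| ≤ 1. -/
open MvPolynomial SimpleGraph
open scoped Classical

/-- A maximal clique: an inclusion-maximal set of pairwise adjacent vertices. -/
def IsMaxClique {V : Type*} (G : SimpleGraph V) (C : Finset V) : Prop :=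
  G.IsClique (C : Set V) ∧ ∀ D : Finset V, G.IsClique (D : Set V) → C ⊆ D → C = D

/-- A shortest path between its endpoints: a path of minimal length. -/
def IsShortestPath {V : Type*} (G : SimpleGraph V) {u v : V} (p : G.Walk u v) : Prop :=
  p.IsPath ∧ p.length = G.dist u v

/-- Λ(p): the multiset of vertex colors and edge colors along a walk. -/
def pathColors {V : Type*} {G : SimpleGraph V} (vcol : V → ℕ) (ecol : Sym2 V → ℕ)
    {u v : V} (p : G.Walk u v) : Multiset ℕ :=
  ↑(p.support.map vcol) + ↑(p.edges.map ecol)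

/-!
On a shortest walk the position of each vertex is its distance from the start. So once a
shortest walk is at a vertex `u` of a clique `C`, the only vertex of `C` it can still visit is
its next one (all of `C` is at distance at most one from `u`), and at most one of its edges
lies inside `C`.
-/

namespace SimpleGraph.Walk

variable {V : Type*} {G : SimpleGraph V} {u v x : V}

theorem eq_snd_of_adj_of_length_eq_dist {p : G.Walk u v} (hp : p.length = G.dist u v)
    (hx : x ∈ p.support) (hadj : G.Adj u x) : x = p.snd := by
  have hpos : (p.takeUntil x hx).length = 1 := by
    rw [length_eq_dist_of_subwalk hp (p.isSubwalk_takeUntil hx), dist_eq_one_iff_adj]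
    exact hadj
  rw [← p.getVert_length_takeUntil hx, hpos, snd]

theorem notMem_sym2_of_mem_edges_of_cons {C : Finset V} (hC : G.IsClique (C : Set V))
    (huC : u ∈ C) {w : V} (h : G.Adj u w) {q : G.Walk w v}
    (hp : (q.cons h).length = G.dist u v) {e : Sym2 V} (he : e ∈ q.edges) : e ∉ C.sym2 := by
  have hC_on_walk : ∀ a ∈ C, a ∈ q.support → a = u ∨ a = w := fun a haC ha => by
    by_cases hau : a = u
    · exact .inl hau
    · exact .inr (eq_snd_of_adj_of_length_eq_dist hp (List.mem_cons_of_mem u ha)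
        (hC huC haC (Ne.symm hau)) |>.trans (snd_cons q h))
  have hnodup : (s(u, w) :: q.edges).Nodup :=
    edges_nodup_of_support_nodup (isPath_of_length_eq_dist _ hp).support_nodup
  induction e using Sym2.ind with
  | _ a b =>
  intro heC
  rw [Finset.mk_mem_sym2_iff] at heC
  have hab : a ≠ b := (q.adj_of_mem_edges he).ne
  have ha := hC_on_walk a heC.1 (q.fst_mem_support_of_mem_edges he)
  have hb := hC_on_walk b heC.2 (q.snd_mem_support_of_mem_edges he)
  have hab_uw : s(a, b) = s(u, w) := by
    rcases ha with rfl | rfl <;> rcases hb with rfl | rfl <;> simp_all [Sym2.eq_swap]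
  exact (List.nodup_cons.mp hnodup).1 (hab_uw ▸ he)

theorem countP_edges_mem_sym2_le_one [DecidableEq V] {C : Finset V}
    (hC : G.IsClique (C : Set V)) (p : G.Walk u v) (hp : p.length = G.dist u v) :
    (p.edges.countP fun e => decide (e ∈ C.sym2)) ≤ 1 := by
  induction p with
  | nil => simp
  | @cons u w v h q ih =>
    rw [edges_cons, List.countP_cons]
    by_cases huC : u ∈ C
    · have hq_zero : (q.edges.countP fun e => decide (e ∈ C.sym2)) = 0 :=
        List.countP_eq_zero.mpr fun e he =>
          by simpa using notMem_sym2_of_mem_edges_of_cons hC huC h hp he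
      rw [hq_zero, zero_add]
      split_ifs <;> simp
    · have huw : s(u, w) ∉ C.sym2 := fun huw => huC (Finset.mk_mem_sym2_iff.mp huw).1
      simpa [huw] using ih (length_eq_dist_of_subwalk hp (q.isSubwalk_cons h))

end SimpleGraph.Walk

theorem shortest_path_clique_at_most_one_edge_general {V : Type*} [DecidableEq V]
    (G : SimpleGraph V)
    {u v : V} (p : G.Walk u v) (hp : IsShortestPath G p)
    (C : Finset V) (hC : IsMaxClique G C) :
    (p.edges.countP fun e => decide (e ∈ C.sym2)) ≤ 1 :=
  p.countP_edges_mem_sym2_le_one hC.1 hp.2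

/-- Lemma 2.6: a shortest path in a block graph shares at most one
edge with any maximal clique. -/
theorem shortest_path_clique_at_most_one_edge {V : Type*} [Fintype V] [DecidableEq V]
    (G : SimpleGraph V) (hconn : G.Connected) (hblock : IsBlockGraph G)
    {u v : V} (p : G.Walk u v) (hp : IsShortestPath G p)
    (C : Finset V) (hC : IsMaxClique G C) :
    (p.edges.countP fun e => decide (e ∈ C.sym2)) ≤ 1 :=
  shortest_path_clique_at_most_one_edge_general G p hp C hC
end

section
/- Let G be a block graph, let k ≥ 0, and let P = (v_0, e_1, v_1, …, e_{k+1}, v_{k+1}) and Q = (v_k, e_{k+1}, v_{k+1}, …, e_n, v_n) be two shortest paths in G that share the edge e_{k+1}. Then their union (v_0, e_1, v_1, …, e_n, v_n) is the unique shortest path between v_0 and v_n. -/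
open MvPolynomial SimpleGraph
open scoped Classical

/-! The whole argument rests on one local fact: in a block graph, if `x ~ y ~ z` with `x ≁ z`,
then every walk from `x` to `z` passes through `y`, since a walk avoiding `y` and the path
`x y z` would be two internally disjoint paths, forcing `x ~ z`. Consequently a geodesic
`u ⋯ x y` extends by any edge `y z` with `x ≁ z`, because a shorter route from `u` to `z` would
avoid `y`. Extending `P` edge by edge along `Q` proves that the glued path is a geodesic.
For uniqueness, compare the first steps `u ~ a` of two geodesics: if the second geodesic passes
through `a`, induct; otherwise the first geodesic `u a c ⋯` can be shortcut by `u ~ c`. -/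

namespace IsBlockGraph

open Walk

variable {V : Type*} {G : SimpleGraph V}

theorem adj_of_notMem_support (hG : IsBlockGraph G) {x y z : V} (hxy : G.Adj x y)
    (hyz : G.Adj y z) (hxz : x ≠ z) (p : G.Walk x z) (hy : y ∉ p.support) : G.Adj x z := by
  refine hG x z hxz ⟨cons hxy (cons hyz nil), p.bypass, ?_, p.bypass_isPath, ?_, ?_⟩
  · simp [hxy.ne, hyz.ne, hxz]
  · intro heq
    exact hy (p.support_bypass_subset_support (heq ▸ by simp))
  · intro w hw hwp
    simp only [support_cons, support_nil, List.mem_cons, List.not_mem_nil, or_false] at hw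
    rcases hw with rfl | rfl | rfl
    · exact .inl rfl
    · exact absurd (p.support_bypass_subset_support hwp) hy
    · exact .inr rfl

theorem length_concat_concat_eq_dist (hG : IsBlockGraph G) {u x y z : V} (p : G.Walk u x)
    (hxy : G.Adj x y) (hyz : G.Adj y z) (hp : (p.concat hxy).length = G.dist u y)
    (hxz : G.dist x z = 2) : ((p.concat hxy).concat hyz).length = G.dist u z := by
  have hy : y ∉ p.support := ((concat_isPath_iff hxy).1 (isPath_of_length_eq_dist _ hp)).2
  refine le_antisymm ?_ (dist_le _)
  by_contra! hlt
  obtain ⟨s, hs⟩ := ((p.concat hxy).concat hyz).reachable.exists_walk_length_eq_dist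
  simp only [length_concat] at hp hlt
  by_cases hys : y ∈ s.support
  · have := s.length_takeUntil_lt_length hys hyz.ne
    have := dist_le (s.takeUntil y hys)
    omega
  · have hne : x ≠ z := by rintro rfl; simp at hxz
    have hadj := hG.adj_of_notMem_support hxy hyz hne (p.reverse.append s) (by simp [hy, hys])
    rw [← dist_eq_one_iff_adj] at hadj
    omega

theorem length_append_cons_eq_dist (hG : IsBlockGraph G) {u x y w : V} (p : G.Walk u x)
    (h : G.Adj x y) (q : G.Walk y w) (hp : (p.concat h).length = G.dist u y)
    (hq : (cons h q).length = G.dist x w) : (p.append (cons h q)).length = G.dist u w := by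
  induction q generalizing x p with
  | nil => exact hp
  | cons h' q ih =>
    rw [← concat_append]
    refine ih (p.concat h) h' (hG.length_concat_concat_eq_dist p h h' hp ?_)
      (length_eq_dist_of_subwalk hq (isSubwalk_cons _ h))
    have hxyz : (cons h (cons h' nil)).IsSubwalk (cons h (cons h' q)) :=
      isSubwalk_of_append_left rfl
    exact (length_eq_dist_of_subwalk hq hxyz).symm

theorem eq_of_length_eq_dist (hG : IsBlockGraph G) {u v : V} {p q : G.Walk u v}
    (hp : p.length = G.dist u v) (hq : q.length = G.dist u v) : p = q := by
  induction p with
  | nil => exact eq_of_length_le_one (by simp) (by simp [hq])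
  | @cons u a v h p ih =>
    by_cases ha : a ∈ q.support
    · have hstart : q.takeUntil a ha = cons h nil := by
        refine eq_of_length_le_one ?_ (by simp)
        rw [length_eq_dist_of_subwalk hq (isSubwalk_takeUntil q ha), dist_eq_one_iff_adj.2 h]
      rw [← q.take_spec ha, hstart, ih (length_eq_dist_of_subwalk hp (isSubwalk_cons p h))
        (length_eq_dist_of_subwalk hq (isSubwalk_dropUntil q ha))]
      rfl
    · cases p with
      | nil => exact absurd q.end_mem_support ha
      | @cons _ c _ h₂ p =>
        have hpath := isPath_of_length_eq_dist _ hp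
        simp only [cons_isPath_iff, support_cons, List.mem_cons, not_or] at hpath
        have huc : u ≠ c := fun huc => hpath.2.2 (huc ▸ p.start_mem_support)
        have hadj := hG.adj_of_notMem_support h h₂ huc (q.append p.reverse)
          (by simp [ha, hpath.1.2])
        have := dist_le (cons hadj p)
        simp only [length_cons] at hp this
        omega

end IsBlockGraph

theorem glueing_shortest_paths_same_edge_general {V : Type*} (G : SimpleGraph V)
    (hblock : IsBlockGraph G)
    {v₀ vₖ vₖ₁ vₙ : V} (A : G.Walk v₀ vₖ) (h : G.Adj vₖ vₖ₁) (B : G.Walk vₖ₁ vₙ)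
    (hP : IsShortestPath G (A.concat h))
    (hQ : IsShortestPath G (SimpleGraph.Walk.cons h B)) :
    IsShortestPath G (A.append (SimpleGraph.Walk.cons h B)) ∧
      ∀ W : G.Walk v₀ vₙ, IsShortestPath G W → W = A.append (SimpleGraph.Walk.cons h B) := by
  have hglued := hblock.length_append_cons_eq_dist A h B hP.2 hQ.2
  exact ⟨⟨Walk.isPath_of_length_eq_dist _ hglued, hglued⟩,
    fun W hW => hblock.eq_of_length_eq_dist hW.2 hglued⟩

/-- Lemma 2.7: two shortest paths sharing an edge glue to the
unique shortest path between the outer endpoints. -/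
theorem glueing_shortest_paths_same_edge {V : Type*} [Fintype V] (G : SimpleGraph V)
    (hconn : G.Connected) (hblock : IsBlockGraph G)
    {v₀ vₖ vₖ₁ vₙ : V} (A : G.Walk v₀ vₖ) (h : G.Adj vₖ vₖ₁) (B : G.Walk vₖ₁ vₙ)
    (hP : IsShortestPath G (A.concat h))
    (hQ : IsShortestPath G (SimpleGraph.Walk.cons h B)) :
    IsShortestPath G (A.append (SimpleGraph.Walk.cons h B)) ∧
      ∀ W : G.Walk v₀ vₙ, IsShortestPath G W → W = A.append (SimpleGraph.Walk.cons h B) :=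
  glueing_shortest_paths_same_edge_general G hblock A h B hP hQ
end

section
/- Let G be a block graph and let P and Q be two shortest paths in G, both of length at least 1 and both having the vertex v as one endpoint. Let e be the edge of P incident to v and f the edge of Q incident to v. If e and f are not contained in a common maximal clique of G, then the union P ∪ Q is again a shortest path in G. -/
/-!
If no maximal clique contains both edges `vx` and `vy`, then `x ≠ y` and `x, y` are not
adjacent. In a block graph this makes `v` a cut vertex separating `x` from `y`: a path from
`x` to `y` avoiding `v`, together with the path `x v y`, would give two internally disjoint
paths and force `x ~ y`. Since the two shortest paths leave `v` through `x` and `y` and never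
return to `v`, every walk between their far endpoints passes through `v`, so the concatenation
is at least as short as any such walk.
-/

open MvPolynomial SimpleGraph
open scoped Classical

section

variable {V : Type*} {G : SimpleGraph V}

lemma exists_isMaxClique_superset [Fintype V] {C₀ : Finset V} (h : G.IsClique (C₀ : Set V)) :
    ∃ C : Finset V, IsMaxClique G C ∧ C₀ ⊆ C := by
  obtain ⟨C, hC₀C, hC, hmax⟩ :=
    Finite.exists_le_maximal (p := fun D : Finset V => G.IsClique (D : Set V)) h
  exact ⟨C, ⟨hC, fun D hD hCD => le_antisymm hCD (hmax hD hCD)⟩, hC₀C⟩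

lemma exists_isMaxClique_edges_mem_sym2 [Fintype V] {v x y : V}
    (h : G.IsClique ({v, x, y} : Set V)) :
    ∃ C : Finset V, IsMaxClique G C ∧ s(v, x) ∈ C.sym2 ∧ s(v, y) ∈ C.sym2 := by
  obtain ⟨C, hC, hsub⟩ := exists_isMaxClique_superset (C₀ := {v, x, y}) (by simpa using h)
  simp only [Finset.insert_subset_iff, Finset.singleton_subset_iff] at hsub
  exact ⟨C, hC, Finset.mk_mem_sym2_iff.2 ⟨hsub.1, hsub.2.1⟩,
    Finset.mk_mem_sym2_iff.2 ⟨hsub.1, hsub.2.2⟩⟩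

lemma IsBlockGraph.mem_support_of_not_adj (hG : IsBlockGraph G) {v x y : V}
    (hx : G.Adj v x) (hy : G.Adj v y) (hxy : x ≠ y) (hnadj : ¬ G.Adj x y)
    (w : G.Walk x y) : v ∈ w.support := by
  by_contra hvw
  have hv : v ∉ w.bypass.support := fun h => hvw (w.support_bypass_subset_support h)
  have hpath : (Walk.cons hx.symm (Walk.cons hy Walk.nil)).IsPath := by
    simp [Walk.cons_isPath_iff, hx.ne', hy.ne, hxy]
  refine hnadj (hG x y hxy ⟨w.bypass, _, w.bypass_isPath, hpath, ?_, ?_⟩)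
  · intro h
    exact hv (h ▸ by simp)
  · intro u hu hu'
    simp only [Walk.support_cons, Walk.support_nil, List.mem_cons, List.not_mem_nil,
      or_false] at hu'
    rcases hu' with rfl | rfl | rfl
    · exact Or.inl rfl
    · exact absurd hu hv
    · exact Or.inr rfl

lemma SimpleGraph.Reachable.dist_add_dist_le_of_forall_mem_support {u v w : V} (huw : G.Reachable u w)
    (hsep : ∀ R : G.Walk u w, v ∈ R.support) :
    G.dist u v + G.dist v w ≤ G.dist u w := by
  obtain ⟨S, hS⟩ := huw.exists_walk_length_eq_dist
  calc G.dist u v + G.dist v w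
      ≤ (S.takeUntil v (hsep S)).length + (S.dropUntil v (hsep S)).length :=
        Nat.add_le_add (dist_le _) (dist_le _)
    _ = G.dist u w := by rw [← Walk.length_append, Walk.take_spec, hS]

end

theorem union_of_shortest_paths_general {V : Type*} [Fintype V]
    (G : SimpleGraph V) (hblock : IsBlockGraph G)
    {v x y a b : V} (h₁ : G.Adj v x) (h₂ : G.Adj v y)
    (p' : G.Walk x a) (q' : G.Walk y b)
    (hP : IsShortestPath G (SimpleGraph.Walk.cons h₁ p'))
    (hQ : IsShortestPath G (SimpleGraph.Walk.cons h₂ q'))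
    (hcl : ¬ ∃ C : Finset V, IsMaxClique G C ∧ s(v, x) ∈ C.sym2 ∧ s(v, y) ∈ C.sym2) :
    IsShortestPath G ((SimpleGraph.Walk.cons h₁ p').reverse.append
      (SimpleGraph.Walk.cons h₂ q')) := by
  have hxy : x ≠ y := by
    rintro rfl
    exact hcl (exists_isMaxClique_edges_mem_sym2 (by simp [isClique_insert, h₁]))
  have hnadj : ¬ G.Adj x y := fun hxy' =>
    hcl (exists_isMaxClique_edges_mem_sym2 (by simp [isClique_insert, h₁, h₂, hxy']))
  have hsep : ∀ R : G.Walk a b, v ∈ R.support := by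
    intro R
    have hv := hblock.mem_support_of_not_adj h₁ h₂ hxy hnadj (p'.append (R.append q'.reverse))
    simp only [Walk.mem_support_append_iff, Walk.support_reverse, List.mem_reverse] at hv
    rcases hv with hv | hv | hv
    · exact absurd hv ((Walk.cons_isPath_iff h₁ p').1 hP.1).2
    · exact hv
    · exact absurd hv ((Walk.cons_isPath_iff h₂ q').1 hQ.1).2
  set W := (Walk.cons h₁ p').reverse.append (Walk.cons h₂ q')
  have hlen : W.length = G.dist a b := by
    refine le_antisymm ?_ (dist_le W)
    calc W.length = G.dist a v + G.dist v b := by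
          rw [Walk.length_append, Walk.length_reverse, hP.2, hQ.2, SimpleGraph.dist_comm]
      _ ≤ G.dist a b := Reachable.dist_add_dist_le_of_forall_mem_support ⟨W⟩ hsep
  exact ⟨W.isPath_of_length_eq_dist hlen, hlen⟩

/-- Corollary 2.8: if two shortest paths of length ≥ 1 start at a
common endpoint v and their initial edges do not lie in a common maximal clique,
then their union is again a shortest path. -/
theorem union_of_shortest_paths {V : Type*} [Fintype V] [DecidableEq V]
    (G : SimpleGraph V) (hconn : G.Connected) (hblock : IsBlockGraph G)
    {v x y a b : V} (h₁ : G.Adj v x) (h₂ : G.Adj v y)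
    (p' : G.Walk x a) (q' : G.Walk y b)
    (hP : IsShortestPath G (SimpleGraph.Walk.cons h₁ p'))
    (hQ : IsShortestPath G (SimpleGraph.Walk.cons h₂ q'))
    (hcl : ¬ ∃ C : Finset V, IsMaxClique G C ∧ s(v, x) ∈ C.sym2 ∧ s(v, y) ∈ C.sym2) :
    IsShortestPath G ((SimpleGraph.Walk.cons h₁ p').reverse.append
      (SimpleGraph.Walk.cons h₂ q')) :=
  union_of_shortest_paths_general G hblock h₁ h₂ p' q' hP hQ hcl
end

section
/- A graph G is a block graph if and only if neither of the following two conditions holds: (1) there exist vertices u, v of G and two distinct paths P ≠ Q between u and v, both of length d(u,v), that are vertex-disjoint except for their endpoints u, v; (2) there exist vertices u, v with d(u,v) ≥ 2, a path P between u and v of length d(u,v), and a path Q between u and v of length d(u,v)+1, such that P and Q are vertex-disjoint except for their endpoints u, v. Here d(u,v) denotes the graph distance between u and v. -/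
open MvPolynomial SimpleGraph
open scoped Classical

namespace BlockAux

open SimpleGraph Walk

variable {V : Type*} {G : SimpleGraph V}

/-- A bad configuration: two internally disjoint paths between distinct non-adjacent
vertices. -/
def Bad (G : SimpleGraph V) (x y : V) (p q : G.Walk x y) : Prop :=
  ¬G.Adj x y ∧ x ≠ y ∧ p.IsPath ∧ q.IsPath ∧
    ∀ w, w ∈ p.support → w ∈ q.support → w = x ∨ w = y

lemma Bad.symm {x y : V} {p q : G.Walk x y} (h : Bad G x y p q) : Bad G x y q p :=
  ⟨h.1, h.2.1, h.2.2.2.1, h.2.2.1, fun w hw hw' => h.2.2.2.2 w hw' hw⟩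

lemma length_pos_of_ne {x y : V} (p : G.Walk x y) (h : x ≠ y) : 1 ≤ p.length := by
  cases p with
  | nil => exact absurd rfl h
  | cons h p => simp [Walk.length_cons]

lemma adj_of_length_one {x y : V} (p : G.Walk x y) (h : p.length = 1) : G.Adj x y := by
  cases p with
  | nil => simp at h
  | cons ha p' =>
    cases p' with
    | nil => exact ha
    | cons _ _ => simp [Walk.length_cons] at h

lemma length_eq_zero_of_isPath_loop {x : V} (p : G.Walk x x) (hp : p.IsPath) :
    p.length = 0 := by
  cases p with
  | nil => rfl
  | cons h p' =>
    exfalso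
    rw [Walk.cons_isPath_iff] at hp
    exact hp.2 p'.end_mem_support

lemma isPath_append {a x b : V} {p : G.Walk a x} {q : G.Walk x b}
    (hp : p.IsPath) (hq : q.IsPath)
    (h : ∀ w, w ∈ p.support → w ∈ q.support → w = x) :
    (p.append q).IsPath := by
  rw [Walk.isPath_def, Walk.support_append]
  have hq' := (Walk.isPath_def q).mp hq
  rw [q.support_eq_cons] at hq'
  refine List.Nodup.append ((Walk.isPath_def p).mp hp) hq'.of_cons ?_
  intro w hw hw'
  have : w ∈ q.support := by rw [q.support_eq_cons]; exact List.mem_cons_of_mem _ hw'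
  have hwx := h w hw this
  subst hwx
  exact (List.nodup_cons.mp hq').1 hw'

lemma notMem_takeUntil {x y a : V} {p : G.Walk x y} (hp : p.IsPath)
    (ha : a ∈ p.support) (hay : a ≠ y) : y ∉ (p.takeUntil a ha).support := by
  intro hy
  have hnd : ((p.takeUntil a ha).append (p.dropUntil a ha)).support.Nodup := by
    rw [p.take_spec ha]; exact hp.support_nodup
  rw [Walk.support_append] at hnd
  have hdisj := List.disjoint_of_nodup_append hnd
  have hy2 : y ∈ (p.dropUntil a ha).support.tail := by
    have h1 : y ∈ (p.dropUntil a ha).support := Walk.end_mem_support _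
    rw [(p.dropUntil a ha).support_eq_cons] at h1
    rcases List.mem_cons.mp h1 with h1 | h1
    · exact absurd h1.symm hay
    · exact h1
  exact hdisj hy hy2

lemma notMem_dropUntil {x y a : V} {p : G.Walk x y} (hp : p.IsPath)
    (ha : a ∈ p.support) (hax : a ≠ x) : x ∉ (p.dropUntil a ha).support := by
  intro hx
  have hnd : ((p.takeUntil a ha).append (p.dropUntil a ha)).support.Nodup := by
    rw [p.take_spec ha]; exact hp.support_nodup
  rw [Walk.support_append] at hnd
  have hdisj := List.disjoint_of_nodup_append hnd
  have hx2 : x ∈ (p.dropUntil a ha).support.tail := by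
    rw [(p.dropUntil a ha).support_eq_cons] at hx
    rcases List.mem_cons.mp hx with h1 | h1
    · exact absurd h1.symm hax
    · exact h1
  exact hdisj (Walk.start_mem_support _) hx2

lemma length_take_add_drop {x y a : V} (p : G.Walk x y) (ha : a ∈ p.support) :
    (p.takeUntil a ha).length + (p.dropUntil a ha).length = p.length := by
  have := congrArg Walk.length (p.take_spec ha)
  rwa [Walk.length_append] at this

/-- The induction measure. -/
def mu (a b : ℕ) : ℕ := (a + b) * (a + b) + max a b

lemma mu_comm (a b : ℕ) : mu a b = mu b a := by
  simp [mu, Nat.add_comm, Nat.max_comm]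

lemma mu_lt_of_sum_lt {a b c d : ℕ} (h : a + b < c + d) : mu a b < mu c d := by
  have h1 : max a b ≤ a + b := max_le (Nat.le_add_right _ _) (Nat.le_add_left _ _)
  have h2 : a + b + 1 ≤ c + d := h
  calc (a+b)*(a+b) + max a b ≤ (a+b)*(a+b) + (a+b) := by omega
    _ < (a+b+1)*(a+b+1) := by nlinarith
    _ ≤ (c+d)*(c+d) := Nat.mul_le_mul h2 h2
    _ ≤ mu c d := Nat.le_add_right _ _

lemma firstHit (Q : V → Prop) {u v : V} (r : G.Walk u v) :
    r.IsPath → (∃ w ∈ r.support, Q w) →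
    ∃ (b : V) (s : G.Walk u b), s.IsPath ∧ Q b ∧ s.length ≤ r.length ∧
      (∀ w ∈ s.support, w ∈ r.support) ∧
      (∀ w ∈ s.support, w ≠ b → ¬ Q w) ∧ (v ∈ s.support → v = b) := by
  induction r with
  | nil =>
    intro _ hq
    obtain ⟨w, hw, hQ⟩ := hq
    rw [Walk.support_nil, List.mem_singleton] at hw
    refine ⟨_, Walk.nil, Walk.IsPath.nil, hw ▸ hQ, le_rfl, fun w hw => hw,
      fun w hw hne => by rw [Walk.support_nil, List.mem_singleton] at hw; exact absurd hw hne,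
      fun _ => rfl⟩
  | @cons u u' v h r' ih =>
    intro hr hq
    rw [Walk.cons_isPath_iff] at hr
    by_cases hQu : Q u
    · refine ⟨u, Walk.nil, Walk.IsPath.nil, hQu, by simp, ?_, ?_, ?_⟩
      · intro w hw
        rw [Walk.support_nil, List.mem_singleton] at hw
        subst hw; exact Walk.start_mem_support _
      · intro w hw hne
        rw [Walk.support_nil, List.mem_singleton] at hw
        exact absurd hw hne
      · intro hv
        rw [Walk.support_nil, List.mem_singleton] at hv
        exact hv
    · have hq' : ∃ w ∈ r'.support, Q w := by
        obtain ⟨w, hw, hQ⟩ := hq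
        rw [Walk.support_cons, List.mem_cons] at hw
        rcases hw with rfl | hw
        · exact absurd hQ hQu
        · exact ⟨w, hw, hQ⟩
      obtain ⟨b, s', hs'path, hQb, hlen, hsub, hcl, hv⟩ := ih hr.1 hq'
      have hvne : v ≠ u := fun huv => hr.2 (huv ▸ r'.end_mem_support)
      refine ⟨b, Walk.cons h s', ?_, hQb, ?_, ?_, ?_, ?_⟩
      · exact Walk.cons_isPath_iff _ _ |>.mpr ⟨hs'path, fun hu => hr.2 (hsub _ hu)⟩
      · simp only [Walk.length_cons]; omega
      · intro w hw
        rw [Walk.support_cons, List.mem_cons] at hw ⊢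
        rcases hw with rfl | hw
        · exact Or.inl rfl
        · exact Or.inr (hsub _ hw)
      · intro w hw hne
        rw [Walk.support_cons, List.mem_cons] at hw
        rcases hw with rfl | hw
        · exact hQu
        · exact hcl w hw hne
      · intro hv'
        rw [Walk.support_cons, List.mem_cons] at hv'
        rcases hv' with h' | h'
        · exact absurd h' hvne
        · exact hv h'

lemma seg (P Q : V → Prop) (hPQ : ∀ w, P w → Q w → False) {u v : V} (r : G.Walk u v) :
    r.IsPath → (∃ w ∈ r.support, P w) → (∃ w ∈ r.support, Q w) →
    ∃ (a b : V) (s : G.Walk a b), s.IsPath ∧ 1 ≤ s.length ∧ s.length ≤ r.length ∧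
      ((P a ∧ Q b) ∨ (Q a ∧ P b)) ∧ (∀ w ∈ s.support, w ∈ r.support) ∧
      (∀ w ∈ s.support, w ≠ a → w ≠ b → ¬P w ∧ ¬Q w ∧ w ≠ u ∧ w ≠ v) := by
  induction r with
  | nil =>
    intro _ hP hQ
    obtain ⟨w, hw, hPw⟩ := hP
    obtain ⟨w', hw', hQw⟩ := hQ
    rw [Walk.support_nil, List.mem_singleton] at hw hw'
    subst hw; subst hw'
    exact absurd hQw (fun hh => hPQ _ hPw hh)
  | @cons u u' v h r' ih =>
    intro hr hP hQ
    rw [Walk.cons_isPath_iff] at hr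
    have strip : ∀ {R : V → Prop}, ¬ R u → (∃ w ∈ (Walk.cons h r').support, R w) →
        ∃ w ∈ r'.support, R w := by
      intro R hn hex
      obtain ⟨w, hw, hR⟩ := hex
      rw [Walk.support_cons, List.mem_cons] at hw
      rcases hw with rfl | hw
      · exact absurd hR hn
      · exact ⟨w, hw, hR⟩
    have lift : (∃ (a b : V) (s : G.Walk a b), s.IsPath ∧ 1 ≤ s.length ∧
        s.length ≤ r'.length ∧ ((P a ∧ Q b) ∨ (Q a ∧ P b)) ∧
        (∀ w ∈ s.support, w ∈ r'.support) ∧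
        (∀ w ∈ s.support, w ≠ a → w ≠ b → ¬P w ∧ ¬Q w ∧ w ≠ u' ∧ w ≠ v)) →
        ∃ (a b : V) (s : G.Walk a b), s.IsPath ∧ 1 ≤ s.length ∧
          s.length ≤ (Walk.cons h r').length ∧ ((P a ∧ Q b) ∨ (Q a ∧ P b)) ∧
          (∀ w ∈ s.support, w ∈ (Walk.cons h r').support) ∧
          (∀ w ∈ s.support, w ≠ a → w ≠ b → ¬P w ∧ ¬Q w ∧ w ≠ u ∧ w ≠ v) := by
      rintro ⟨a, b, s, h1, h2, h3, h4, h6, h5⟩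
      refine ⟨a, b, s, h1, h2, by simp only [Walk.length_cons]; omega, h4, ?_, ?_⟩
      · intro w hw
        rw [Walk.support_cons, List.mem_cons]
        exact Or.inr (h6 w hw)
      · intro w hw hwa hwb
        obtain ⟨c1, c2, _, c4⟩ := h5 w hw hwa hwb
        exact ⟨c1, c2, fun hwu => hr.2 (hwu ▸ h6 w hw), c4⟩
    by_cases hPu : P u
    · have hQu : ¬ Q u := fun hq => hPQ u hPu hq
      have hq' := strip hQu hQ
      by_cases hP' : ∃ w ∈ r'.support, P w
      · exact lift (ih hr.1 hP' hq')
      · obtain ⟨b, s', h1, hQb, hlen, hsub, hcl, hv⟩ := firstHit Q r' hr.1 hq'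
        push_neg at hP'
        refine ⟨u, b, Walk.cons h s',
          (Walk.cons_isPath_iff _ _).mpr ⟨h1, fun hu => hr.2 (hsub _ hu)⟩,
          by simp only [Walk.length_cons]; omega,
          by simp only [Walk.length_cons]; omega, Or.inl ⟨hPu, hQb⟩, ?_, ?_⟩
        · intro w hw
          rw [Walk.support_cons, List.mem_cons] at hw ⊢
          rcases hw with rfl | hw
          · exact Or.inl rfl
          · exact Or.inr (hsub _ hw)
        · intro w hw hwa hwb
          rw [Walk.support_cons, List.mem_cons] at hw
          rcases hw with rfl | hw
          · exact absurd rfl hwa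
          · refine ⟨hP' w (hsub _ hw), hcl w hw hwb,
              fun hwu => hr.2 (hwu ▸ hsub _ hw), fun hwv => hwb ?_⟩
            subst hwv
            exact hv hw
    · by_cases hQu : Q u
      · have hPu' : ¬ P u := fun hp => hPQ u hp hQu
        have hp' := strip hPu' hP
        by_cases hQ' : ∃ w ∈ r'.support, Q w
        · exact lift (ih hr.1 hp' hQ')
        · obtain ⟨b, s', h1, hPb, hlen, hsub, hcl, hv⟩ := firstHit P r' hr.1 hp'
          push_neg at hQ'
          refine ⟨u, b, Walk.cons h s',
            (Walk.cons_isPath_iff _ _).mpr ⟨h1, fun hu => hr.2 (hsub _ hu)⟩,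
            by simp only [Walk.length_cons]; omega,
            by simp only [Walk.length_cons]; omega, Or.inr ⟨hQu, hPb⟩, ?_, ?_⟩
          · intro w hw
            rw [Walk.support_cons, List.mem_cons] at hw ⊢
            rcases hw with rfl | hw
            · exact Or.inl rfl
            · exact Or.inr (hsub _ hw)
          · intro w hw hwa hwb
            rw [Walk.support_cons, List.mem_cons] at hw
            rcases hw with rfl | hw
            · exact absurd rfl hwa
            · refine ⟨hcl w hw hwb, hQ' w (hsub _ hw),
                fun hwu => hr.2 (hwu ▸ hsub _ hw), fun hwv => hwb ?_⟩
              subst hwv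
              exact hv hw
      · exact lift (ih hr.1 (strip hPu hP) (strip hQu hQ))


lemma subl {x y a b : V} {p q : G.Walk x y}
    (IH : ∀ (x' y' : V) (p' q' : G.Walk x' y'), Bad G x' y' p' q' →
        p'.length + q'.length < p.length + q.length → False)
    (hbad : Bad G x y p q)
    (hd2 : 2 ≤ G.dist x y) (hdp : G.dist x y < p.length) (hdq : G.dist x y < q.length)
    (hap : a ∈ p.support) (hax : a ≠ x) (hay : a ≠ y)
    (hbq : b ∈ q.support) (hbx : b ≠ x) (hby : b ≠ y)
    (s : G.Walk a b) (hs : s.IsPath) (hs1 : 1 ≤ s.length) (hsd : s.length ≤ G.dist x y)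
    (hint : ∀ w ∈ s.support, w ≠ a → w ≠ b → w ∉ p.support ∧ w ∉ q.support) :
    False := by
  obtain ⟨hnadj, hxy, hp, hq, hdisj⟩ := hbad
  have haq : a ∉ q.support := fun hh => (hdisj a hap hh).elim hax hay
  have hbp : b ∉ p.support := fun hh => (hdisj b hh hbq).elim hbx hby
  have hab : a ≠ b := fun hh => haq (hh ▸ hbq)
  set p1 := p.takeUntil a hap with hp1def
  set p2 := p.dropUntil a hap with hp2def
  set q1 := q.takeUntil b hbq with hq1def
  set q2 := q.dropUntil b hbq with hq2def
  have hp1 : p1.IsPath := hp.takeUntil hap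
  have hp2 : p2.IsPath := hp.dropUntil hap
  have hq1 : q1.IsPath := hq.takeUntil hbq
  have hq2 : q2.IsPath := hq.dropUntil hbq
  have hyp1 : y ∉ p1.support := notMem_takeUntil hp hap hay
  have hxp2 : x ∉ p2.support := notMem_dropUntil hp hap hax
  have hyq1 : y ∉ q1.support := notMem_takeUntil hq hbq hby
  have hxq2 : x ∉ q2.support := notMem_dropUntil hq hbq hbx
  have hlp : p1.length + p2.length = p.length := length_take_add_drop p hap
  have hlq : q1.length + q2.length = q.length := length_take_add_drop q hbq
  have hp11 : 1 ≤ p1.length := length_pos_of_ne p1 (Ne.symm hax)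
  have hp21 : 1 ≤ p2.length := length_pos_of_ne p2 hay
  have hq11 : 1 ≤ q1.length := length_pos_of_ne q1 (Ne.symm hbx)
  have hq21 : 1 ≤ q2.length := length_pos_of_ne q2 hby
  have hp1sub : ∀ w ∈ p1.support, w ∈ p.support := fun w hw => p.support_takeUntil_subset hap hw
  have hp2sub : ∀ w ∈ p2.support, w ∈ p.support := fun w hw => p.support_dropUntil_subset hap hw
  have hq1sub : ∀ w ∈ q1.support, w ∈ q.support := fun w hw => q.support_takeUntil_subset hbq hw
  have hq2sub : ∀ w ∈ q2.support, w ∈ q.support := fun w hw => q.support_dropUntil_subset hbq hw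
  by_cases hadj : G.Adj a b
  · -- derive Adj x a
    have hxa : G.Adj x a := by
      by_contra hn
      have hepath : (Walk.cons hadj.symm (Walk.nil : G.Walk a a)).IsPath := by
        rw [Walk.cons_isPath_iff]
        exact ⟨Walk.IsPath.nil, by rw [Walk.support_nil, List.mem_singleton]; exact Ne.symm hab⟩
      have hu1 : (q1.append (Walk.cons hadj.symm Walk.nil)).IsPath := by
        refine isPath_append hq1 hepath ?_
        intro w hw hw'
        rw [Walk.support_cons, Walk.support_nil, List.mem_cons, List.mem_singleton] at hw'
        rcases hw' with hw' | hw'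
        · exact hw'
        · subst hw'
          exact absurd (hq1sub _ hw) haq
      refine IH x a p1 (q1.append (Walk.cons hadj.symm Walk.nil))
        ⟨hn, Ne.symm hax, hp1, hu1, ?_⟩ ?_
      · intro w hw hw'
        rw [Walk.mem_support_append_iff] at hw'
        rcases hw' with hw' | hw'
        · rcases hdisj w (hp1sub _ hw) (hq1sub _ hw') with rfl | rfl
          · exact Or.inl rfl
          · exact absurd hw hyp1
        · rw [Walk.support_cons, Walk.support_nil, List.mem_cons, List.mem_singleton] at hw'
          rcases hw' with rfl | rfl
          · exact absurd (hp1sub _ hw) hbp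
          · exact Or.inr rfl
      · rw [Walk.length_append, Walk.length_cons, Walk.length_nil]
        omega
    have hya : G.Adj a y := by
      by_contra hn
      have hu2 : (Walk.cons hadj q2).IsPath := by
        rw [Walk.cons_isPath_iff]
        exact ⟨hq2, fun hh => haq (hq2sub _ hh)⟩
      refine IH a y p2 (Walk.cons hadj q2) ⟨hn, hay, hp2, hu2, ?_⟩ ?_
      · intro w hw hw'
        rw [Walk.support_cons, List.mem_cons] at hw'
        rcases hw' with rfl | hw'
        · exact Or.inl rfl
        · rcases hdisj w (hp2sub _ hw) (hq2sub _ hw') with rfl | rfl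
          · exact absurd hw hxp2
          · exact Or.inr rfl
      · rw [Walk.length_cons]
        omega
    -- final contradiction
    have hv2 : (Walk.cons hxa (Walk.cons hya Walk.nil) : G.Walk x y).IsPath := by
      rw [Walk.cons_isPath_iff, Walk.cons_isPath_iff]
      refine ⟨⟨Walk.IsPath.nil, ?_⟩, ?_⟩
      · rw [Walk.support_nil, List.mem_singleton]; exact hay
      · rw [Walk.support_cons, Walk.support_nil, List.mem_cons, List.mem_singleton]
        rintro (hh | hh)
        · exact hax hh.symm
        · exact hxy hh
    refine IH x y (Walk.cons hxa (Walk.cons hya Walk.nil)) q ⟨hnadj, hxy, hv2, hq, ?_⟩ ?_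
    · intro w hw hw'
      rw [Walk.support_cons, Walk.support_cons, Walk.support_nil, List.mem_cons,
        List.mem_cons, List.mem_singleton] at hw
      rcases hw with rfl | rfl | rfl
      · exact Or.inl rfl
      · exact absurd hw' haq
      · exact Or.inr rfl
    · rw [Walk.length_cons, Walk.length_cons, Walk.length_nil]
      omega
  · -- a, b not adjacent : use the segment s together with one side of the theta
    rcases le_total (p1.length + q1.length) (p2.length + q2.length) with hm | hm
    · -- go through x
      have ht : (p1.reverse.append q1).IsPath := by
        refine isPath_append hp1.reverse hq1 ?_
        intro w hw hw'
        rw [Walk.support_reverse, List.mem_reverse] at hw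
        rcases hdisj w (hp1sub _ hw) (hq1sub _ hw') with rfl | rfl
        · rfl
        · exact absurd hw hyp1
      refine IH a b s (p1.reverse.append q1) ⟨hadj, hab, hs, ht, ?_⟩ ?_
      · intro w hw hw'
        by_contra hcon
        push_neg at hcon
        obtain ⟨hw1, hw2⟩ := hint w hw hcon.1 hcon.2
        rw [Walk.mem_support_append_iff] at hw'
        rcases hw' with hw' | hw'
        · rw [Walk.support_reverse, List.mem_reverse] at hw'
          exact hw1 (hp1sub _ hw')
        · exact hw2 (hq1sub _ hw')
      · rw [Walk.length_append, Walk.length_reverse]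
        omega
    · -- go through y
      have ht : (p2.append q2.reverse).IsPath := by
        refine isPath_append hp2 hq2.reverse ?_
        intro w hw hw'
        rw [Walk.support_reverse, List.mem_reverse] at hw'
        rcases hdisj w (hp2sub _ hw) (hq2sub _ hw') with rfl | rfl
        · exact absurd hw hxp2
        · rfl
      refine IH a b s (p2.append q2.reverse) ⟨hadj, hab, hs, ht, ?_⟩ ?_
      · intro w hw hw'
        by_contra hcon
        push_neg at hcon
        obtain ⟨hw1, hw2⟩ := hint w hw hcon.1 hcon.2
        rw [Walk.mem_support_append_iff] at hw'
        rcases hw' with hw' | hw'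
        · exact hw1 (hp2sub _ hw')
        · rw [Walk.support_reverse, List.mem_reverse] at hw'
          exact hw2 (hq2sub _ hw')
      · rw [Walk.length_append, Walk.length_reverse]
        omega


lemma key
    (hN1 : ¬ ∃ (u v : V) (p q : G.Walk u v),
        p.IsPath ∧ q.IsPath ∧ p.length = G.dist u v ∧ q.length = G.dist u v ∧
        p ≠ q ∧ (∀ w, w ∈ p.support → w ∈ q.support → w = u ∨ w = v))
    (hN2 : ¬ ∃ (u v : V) (p q : G.Walk u v),
        2 ≤ G.dist u v ∧ p.IsPath ∧ q.IsPath ∧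
        p.length = G.dist u v ∧ q.length = G.dist u v + 1 ∧
        (∀ w, w ∈ p.support → w ∈ q.support → w = u ∨ w = v))
    {x y : V} (p q : G.Walk x y)
    (IH : ∀ (x' y' : V) (p' q' : G.Walk x' y'), Bad G x' y' p' q' →
        mu p'.length q'.length < mu p.length q.length → False)
    (hbad : Bad G x y p q) (hle : p.length ≤ q.length) : False := by
  obtain ⟨hnadj, hxy, hp, hq, hdisj⟩ := hbad
  have IHs : ∀ (x' y' : V) (p' q' : G.Walk x' y'), Bad G x' y' p' q' →
      p'.length + q'.length < p.length + q.length → False :=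
    fun x' y' p' q' hb hlt => IH x' y' p' q' hb (mu_lt_of_sum_lt hlt)
  have hreach : G.Reachable x y := ⟨p⟩
  have hd0 : G.dist x y ≠ 0 := by
    rw [Ne, dist_eq_zero_iff_eq_or_not_reachable]
    rintro (h | h)
    · exact hxy h
    · exact h hreach
  have hd1 : G.dist x y ≠ 1 := fun h => hnadj (dist_eq_one_iff_adj.mp h)
  have hd2 : 2 ≤ G.dist x y := by omega
  have hdlep : G.dist x y ≤ p.length := dist_le p
  have hdleq : G.dist x y ≤ q.length := dist_le q
  have hp2 : 2 ≤ p.length := by omega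
  by_cases hcase : G.dist x y < p.length
  · -- there is a strictly shorter geodesic; interiors analysis
    obtain ⟨r0, hr0⟩ := hreach.exists_walk_length_eq_dist
    have hrpath : r0.bypass.IsPath := r0.bypass_isPath
    have hrlen : r0.bypass.length = G.dist x y :=
      le_antisymm (le_trans r0.length_bypass_le (le_of_eq hr0)) (dist_le _)
    set r := r0.bypass with hrdef
    by_cases hhp : ∃ w ∈ r.support, w ∈ p.support ∧ w ≠ x ∧ w ≠ y
    · by_cases hhq : ∃ w ∈ r.support, w ∈ q.support ∧ w ≠ x ∧ w ≠ y
      · -- the geodesic meets the interiors of both paths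
        obtain ⟨a, b, s, hs, hs1, hslen, hends, hssub, hcl⟩ :=
          seg (fun w => w ∈ p.support ∧ w ≠ x ∧ w ≠ y)
            (fun w => w ∈ q.support ∧ w ≠ x ∧ w ≠ y)
            (fun w hP hQ => by
              rcases hdisj w hP.1 hQ.1 with rfl | rfl
              · exact hP.2.1 rfl
              · exact hP.2.2 rfl) r hrpath hhp hhq
        have hsd : s.length ≤ G.dist x y := hrlen ▸ hslen
        rcases hends with ⟨hPa, hQb⟩ | ⟨hQa, hPb⟩
        · refine subl IHs ⟨hnadj, hxy, hp, hq, hdisj⟩ hd2 hcase (lt_of_lt_of_le hcase hle)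
            hPa.1 hPa.2.1 hPa.2.2 hQb.1 hQb.2.1 hQb.2.2 s hs hs1 hsd ?_
          intro w hw hwa hwb
          obtain ⟨c1, c2, c3, c4⟩ := hcl w hw hwa hwb
          constructor
          · intro hwp; exact c1 ⟨hwp, c3, c4⟩
          · intro hwq; exact c2 ⟨hwq, c3, c4⟩
        · refine subl (fun x' y' p' q' hb hlt => IHs x' y' p' q' hb (by omega))
            (Bad.symm ⟨hnadj, hxy, hp, hq, hdisj⟩) hd2 (lt_of_lt_of_le hcase hle) hcase
            hQa.1 hQa.2.1 hQa.2.2 hPb.1 hPb.2.1 hPb.2.2 s hs hs1 hsd ?_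
          intro w hw hwa hwb
          obtain ⟨c1, c2, c3, c4⟩ := hcl w hw hwa hwb
          constructor
          · intro hwq; exact c2 ⟨hwq, c3, c4⟩
          · intro hwp; exact c1 ⟨hwp, c3, c4⟩
      · -- geodesic internally avoids q : replace p by the geodesic against q
        refine IHs x y q r ⟨hnadj, hxy, hq, hrpath, ?_⟩ ?_
        · intro w hw hw'
          by_cases hwx : w = x
          · exact Or.inl hwx
          by_cases hwy : w = y
          · exact Or.inr hwy
          exact absurd ⟨w, hw', hw, hwx, hwy⟩ hhq
        · omega
    · refine IHs x y r p ⟨hnadj, hxy, hrpath, hp, ?_⟩ ?_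
      · intro w hw hw'
        by_cases hwx : w = x
        · exact Or.inl hwx
        by_cases hwy : w = y
        · exact Or.inr hwy
        exact absurd ⟨w, hw, hw', hwx, hwy⟩ hhp
      · omega
  · -- p is a geodesic
    have hdp : G.dist x y = p.length := by omega
    by_cases hc2 : q.length ≤ p.length + 1
    · -- q is a geodesic or one longer : contradicts hN1 / hN2
      rcases (by omega : q.length = p.length ∨ q.length = p.length + 1) with hq2 | hq2
      · refine hN1 ⟨x, y, p, q, hp, hq, hdp.symm, by omega, ?_, hdisj⟩
        -- p ≠ q via the second vertex of p
        cases p with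
        | nil => simp at hp2
        | cons hadj p' =>
          rename_i z
          intro hpq
          have hz : z ∈ (Walk.cons hadj p').support := by
            rw [Walk.support_cons]
            exact List.mem_cons_of_mem _ p'.start_mem_support
          have hz' : z ∈ q.support := hpq ▸ hz
          rcases hdisj z hz hz' with rfl | rfl
          · exact G.irrefl hadj
          · rw [Walk.cons_isPath_iff] at hp
            have := length_eq_zero_of_isPath_loop p' hp.1
            rw [Walk.length_cons] at hp2
            omega
      · exact hN2 ⟨x, y, p, q, hd2, hp, hq, hdp.symm, by omega, hdisj⟩
    · -- q is too long : shift its first vertex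
      cases q with
      | nil => exact hxy rfl
      | cons hadj q' =>
        rename_i x'
        rw [Walk.cons_isPath_iff] at hq
        rw [Walk.length_cons] at hc2 hle hdleq
        have hx'x : x' ≠ x := hadj.ne'
        have hx'y : x' ≠ y := by
          intro hh
          subst hh
          have := length_eq_zero_of_isPath_loop q' hq.1
          omega
        have hx'q : x' ∈ (Walk.cons hadj q').support := by
          rw [Walk.support_cons]
          exact List.mem_cons_of_mem _ q'.start_mem_support
        have hx'p : x' ∉ p.support := by
          intro hh
          rcases hdisj x' hh hx'q with rfl | rfl
          · exact hx'x rfl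
          · exact hx'y rfl
        by_cases hx'adj : G.Adj x' y
        · refine IHs x y p (Walk.cons hadj (Walk.cons hx'adj Walk.nil))
            ⟨hnadj, hxy, hp, ?_, ?_⟩ ?_
          · rw [Walk.cons_isPath_iff, Walk.cons_isPath_iff]
            refine ⟨⟨Walk.IsPath.nil, ?_⟩, ?_⟩
            · rw [Walk.support_nil, List.mem_singleton]; exact hx'y
            · rw [Walk.support_cons, Walk.support_nil, List.mem_cons, List.mem_singleton]
              rintro (hh | hh)
              · exact hx'x hh.symm
              · exact hxy hh
          · intro w hw hw'
            rw [Walk.support_cons, Walk.support_cons, Walk.support_nil, List.mem_cons,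
              List.mem_cons, List.mem_singleton] at hw'
            rcases hw' with rfl | rfl | rfl
            · exact Or.inl rfl
            · exact absurd hw hx'p
            · exact Or.inr rfl
          · simp only [Walk.length_cons, Walk.length_nil]
            omega
        · refine IH x' y q' (Walk.cons hadj.symm p) ⟨hx'adj, hx'y, hq.1, ?_, ?_⟩ ?_
          · rw [Walk.cons_isPath_iff]
            exact ⟨hp, hx'p⟩
          · intro w hw hw'
            rw [Walk.support_cons, List.mem_cons] at hw'
            rcases hw' with hwx | hw'
            · exact Or.inl hwx
            · rcases hdisj w hw' (by
                rw [Walk.support_cons]; exact List.mem_cons_of_mem _ hw) with hwx | hwy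
              · exact absurd hw (by rw [hwx]; exact hq.2)
              · exact Or.inr hwy
          · -- lexicographic decrease : same sum, smaller max
            simp only [Walk.length_cons]
            have hm1 : max q'.length (p.length + 1) = q'.length := max_eq_left (by omega)
            have hm2 : max p.length (q'.length + 1) = q'.length + 1 := max_eq_right (by omega)
            rw [mu, mu, hm1, hm2,
              (by omega : q'.length + (p.length + 1) = p.length + (q'.length + 1))]
            exact Nat.add_lt_add_left (by omega) _

lemma main
    (hN1 : ¬ ∃ (u v : V) (p q : G.Walk u v),
        p.IsPath ∧ q.IsPath ∧ p.length = G.dist u v ∧ q.length = G.dist u v ∧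
        p ≠ q ∧ (∀ w, w ∈ p.support → w ∈ q.support → w = u ∨ w = v))
    (hN2 : ¬ ∃ (u v : V) (p q : G.Walk u v),
        2 ≤ G.dist u v ∧ p.IsPath ∧ q.IsPath ∧
        p.length = G.dist u v ∧ q.length = G.dist u v + 1 ∧
        (∀ w, w ∈ p.support → w ∈ q.support → w = u ∨ w = v)) :
    ∀ (n : ℕ) (x y : V) (p q : G.Walk x y), Bad G x y p q →
      mu p.length q.length < n → False := by
  intro n
  induction n with
  | zero => exact fun x y p q _ h => absurd h (Nat.not_lt_zero _)
  | succ n ih =>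
    intro x y p q hbad hmu
    have IH : ∀ (x' y' : V) (p' q' : G.Walk x' y'), Bad G x' y' p' q' →
        mu p'.length q'.length < mu p.length q.length → False :=
      fun x' y' p' q' hb hlt => ih x' y' p' q' hb (by omega)
    rcases le_total p.length q.length with h | h
    · exact key hN1 hN2 p q IH hbad h
    · refine key hN1 hN2 q p (fun x' y' p' q' hb hlt => IH x' y' p' q' hb ?_) hbad.symm h
      rwa [mu_comm q.length p.length] at hlt

end BlockAux

/-- Proposition 2.9: characterization of block graphs. A graph is a
block graph iff there is no pair of internally-disjoint shortest paths between two
vertices, and no internally-disjoint pair consisting of a shortest path and a path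
one longer between two vertices at distance at least two. -/
theorem blockGraph_characterization {V : Type*} [Fintype V] (G : SimpleGraph V) :
    IsBlockGraph G ↔
      (¬ ∃ (u v : V) (p q : G.Walk u v),
          p.IsPath ∧ q.IsPath ∧ p.length = G.dist u v ∧ q.length = G.dist u v ∧
          p ≠ q ∧ (∀ w, w ∈ p.support → w ∈ q.support → w = u ∨ w = v)) ∧
      (¬ ∃ (u v : V) (p q : G.Walk u v),
          2 ≤ G.dist u v ∧ p.IsPath ∧ q.IsPath ∧
          p.length = G.dist u v ∧ q.length = G.dist u v + 1 ∧
          (∀ w, w ∈ p.support → w ∈ q.support → w = u ∨ w = v)) := by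
  constructor
  · intro hBG
    constructor
    · rintro ⟨u, v, p, q, hp, hq, hpl, hql, hne, hdj⟩
      have huv : u ≠ v := by
        rintro rfl
        cases p with
        | nil =>
          cases q with
          | nil => exact hne rfl
          | cons h q' =>
            rw [Walk.cons_isPath_iff] at hq
            exact hq.2 q'.end_mem_support
        | cons h p' =>
          rw [Walk.cons_isPath_iff] at hp
          exact hp.2 p'.end_mem_support
      have hadj := hBG u v huv ⟨p, q, hp, hq, hne, hdj⟩
      have hd1 : G.dist u v = 1 := SimpleGraph.dist_eq_one_iff_adj.mpr hadj
      rw [hd1] at hpl hql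
      cases p with
      | nil => simp at hpl
      | cons hp1 p' =>
        cases p' with
        | cons _ _ => simp [Walk.length_cons] at hpl
        | nil =>
          cases q with
          | nil => simp at hql
          | cons hq1 q' =>
            cases q' with
            | cons _ _ => simp [Walk.length_cons] at hql
            | nil => exact hne rfl
    · rintro ⟨u, v, p, q, hd2, hp, hq, hpl, hql, hdj⟩
      have huv : u ≠ v := by
        rintro rfl
        rw [SimpleGraph.dist_self] at hd2
        omega
      have hne : p ≠ q := by
        intro h
        rw [h, hql] at hpl
        omega
      have hadj := hBG u v huv ⟨p, q, hp, hq, hne, hdj⟩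
      rw [SimpleGraph.dist_eq_one_iff_adj.mpr hadj] at hd2
      omega
  · rintro ⟨hN1, hN2⟩ u v huv ⟨p, q, hp, hq, hne, hdj⟩
    by_contra hnadj
    exact BlockAux.main hN1 hN2 (BlockAux.mu p.length q.length + 1) u v p q
      ⟨hnadj, huv, hp, hq, hdj⟩ (Nat.lt_succ_self _)
end

section
/- Every triangle-regular colored graph G is vertex triangle-regular: any two vertices of the same color are contained in the same multiset of colored triangles. -/
/-! For a vertex `u`, let `A_u (α, β, γ)` count the ordered pairs `(p, q)` spanning a triangle with
`u` whose edges `up`, `uq`, `pq` have colours `α`, `β`, `γ`. By edge-regularity the colours of `p`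
and `q` are read off `α` and `β` (given the colour of `u`), so it suffices that `A_u` depends only
on the colour of `u`. Summing the triangle data of the edges `up` over the star of `u`, which
depends only on the colour of `u` by vertex-regularity and edge triangle-regularity, yields
`S_u (α, {β, γ}) = A_u (α, β, γ) + A_u (α, γ, β)`. As `A_u` is symmetric in its first two
arguments, `2 A_u (α, β, γ) = S_u (α, β, γ) + S_u (β, α, γ) - S_u (γ, α, β)`. -/

open MvPolynomial SimpleGraph
open scoped Classical

/-- The vertex colors are disjoint from the edge colors. -/
def ColorsDisjoint {V : Type*} (G : SimpleGraph V) (vcol : V → ℕ) (ecol : Sym2 V → ℕ) : Prop :=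
  ∀ v : V, ∀ e ∈ G.edgeSet, vcol v ≠ ecol e

/-- The multiset of colors of the edges incident to a vertex. -/
noncomputable def vertexStar {V : Type*} [Fintype V] (G : SimpleGraph V)
    (ecol : Sym2 V → ℕ) (v : V) : Multiset ℕ :=
  (Finset.univ.filter fun w => G.Adj v w).val.map fun w => ecol s(v, w)

/-- Vertex-regular: any two vertices of the same color are incident with the same
multiset of colored edges. -/
def VertexRegular {V : Type*} [Fintype V] (G : SimpleGraph V) (vcol : V → ℕ)
    (ecol : Sym2 V → ℕ) : Prop :=
  ∀ u v : V, vcol u = vcol v → vertexStar G ecol u = vertexStar G ecol v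

/-- Edge-regular: any two edges of the same color are incident with the same
multiset of colored vertices. -/
def EdgeRegular {V : Type*} (G : SimpleGraph V) (vcol : V → ℕ) (ecol : Sym2 V → ℕ) : Prop :=
  ∀ i j i' j' : V, G.Adj i j → G.Adj i' j' → ecol s(i, j) = ecol s(i', j') →
    s(vcol i, vcol j) = s(vcol i', vcol j')

/-- The multiset of colored triangles containing a given edge {i,j}: for each common
neighbor w of i and j, the color of w together with the unordered pair of colors of
the two other edges of the triangle. -/
noncomputable def edgeTriangles {V : Type*} [Fintype V] (G : SimpleGraph V)
    (vcol : V → ℕ) (ecol : Sym2 V → ℕ) (i j : V) : Multiset (ℕ × Sym2 ℕ) :=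
  (Finset.univ.filter fun w => G.Adj i w ∧ G.Adj j w).val.map
    fun w => (vcol w, s(ecol s(i, w), ecol s(j, w)))

/-- Edge triangle-regular: any two edges of the same color are contained in the same
multiset of colored triangles. -/
def EdgeTriangleRegular {V : Type*} [Fintype V] (G : SimpleGraph V) (vcol : V → ℕ)
    (ecol : Sym2 V → ℕ) : Prop :=
  ∀ i j i' j' : V, G.Adj i j → G.Adj i' j' → ecol s(i, j) = ecol s(i', j') →
    edgeTriangles G vcol ecol i j = edgeTriangles G vcol ecol i' j'

/-- Triangle-regular: vertex-regular, edge-regular and edge triangle-regular. -/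
def TriangleRegular {V : Type*} [Fintype V] (G : SimpleGraph V) (vcol : V → ℕ)
    (ecol : Sym2 V → ℕ) : Prop :=
  VertexRegular G vcol ecol ∧ EdgeRegular G vcol ecol ∧ EdgeTriangleRegular G vcol ecol

/-- The multiset of colored triangles containing a given vertex u: for each pair of
adjacent neighbors of u, the unordered pair of (vertex color, connecting edge color)
data together with the color of the opposite edge.  (Each triangle is counted twice,
once for each orientation, so equality of these multisets is equality of the
multisets of colored triangles.) -/
noncomputable def vertexTriangles {V : Type*} [Fintype V] (G : SimpleGraph V)
    (vcol : V → ℕ) (ecol : Sym2 V → ℕ) (u : V) : Multiset (Sym2 (ℕ × ℕ) × ℕ) :=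
  (Finset.univ.filter fun p : V × V => G.Adj u p.1 ∧ G.Adj u p.2 ∧ G.Adj p.1 p.2).val.map
    fun p => (s((vcol p.1, ecol s(u, p.1)), (vcol p.2, ecol s(u, p.2))), ecol s(p.1, p.2))

section Triples

variable {X : Type*}

def unorderLast (t : X × X × X) : X × Sym2 X := (t.1, s(t.2.1, t.2.2))

def swapFirstTwo (t : X × X × X) : X × X × X := (t.2.1, t.1, t.2.2)

namespace Multiset

theorem count_map_unorderLast [DecidableEq X] (M : Multiset (X × X × X)) (a b c : X) :
    count (a, s(b, c)) (M.map unorderLast) =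
      count (a, b, c) M + if b = c then 0 else count (a, c, b) M := by
  have hfib : ∀ t : X × X × X,
      (a, s(b, c)) = unorderLast t ↔ (a, b, c) = t ∨ (a, c, b) = t := by
    rintro ⟨x, y, z⟩
    simp only [unorderLast, Prod.mk.injEq, Sym2.eq_iff]
    tauto
  rw [count_map, filter_congr fun t _ => hfib t, count_eq_card_filter_eq, count_eq_card_filter_eq]
  split_ifs with hbc
  · subst hbc
    simp
  · have hboth : M.filter (fun t => (a, b, c) = t ∧ (a, c, b) = t) = 0 :=
      filter_eq_nil.2 fun _ _ ⟨h, h'⟩ =>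
        hbc (Prod.ext_iff.1 (Prod.ext_iff.1 (h.trans h'.symm)).2).1
    rw [← card_add, filter_add_filter, hboth, add_zero]

theorem count_add_count_eq_of_map_unorderLast_eq [DecidableEq X] {M M' : Multiset (X × X × X)}
    (h : M.map unorderLast = M'.map unorderLast) (a b c : X) :
    count (a, b, c) M + count (a, c, b) M = count (a, b, c) M' + count (a, c, b) M' := by
  have hM := count_map_unorderLast M a b c
  have hM' := count_map_unorderLast M' a b c
  rw [h] at hM
  split_ifs at hM hM' with hbc
  · subst hbc
    omega
  · omega

theorem count_swapFirstTwo {M : Multiset (X × X × X)} [DecidableEq X]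
    (hM : M.map swapFirstTwo = M) (a b c : X) : count (b, a, c) M = count (a, b, c) M := by
  have hinj : Function.Injective (swapFirstTwo : X × X × X → X × X × X) := by
    rintro ⟨x, y, z⟩ ⟨x', y', z'⟩ h
    simp only [swapFirstTwo, Prod.mk.injEq] at h ⊢
    tauto
  conv_lhs => rw [← hM]
  exact count_map_eq_count' swapFirstTwo M hinj (a, b, c)

theorem eq_of_map_unorderLast_eq {M M' : Multiset (X × X × X)}
    (hM : M.map swapFirstTwo = M) (hM' : M'.map swapFirstTwo = M')
    (h : M.map unorderLast = M'.map unorderLast) : M = M' := by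
  classical
  refine ext.2 fun ⟨a, b, c⟩ => ?_
  have := count_add_count_eq_of_map_unorderLast_eq h a b c
  have := count_add_count_eq_of_map_unorderLast_eq h b a c
  have := count_add_count_eq_of_map_unorderLast_eq h c a b
  have := count_swapFirstTwo hM a b c
  have := count_swapFirstTwo hM a c b
  have := count_swapFirstTwo hM b c a
  have := count_swapFirstTwo hM' a b c
  have := count_swapFirstTwo hM' a c b
  have := count_swapFirstTwo hM' b c a
  omega

end Multiset

end Triples

theorem exists_eq_comp_of_factorsThrough_on {α β γ : Type*} [Nonempty β] {P : α → Prop}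
    {f : α → β} {g : α → γ} (h : ∀ a b, P a → P b → g a = g b → f a = f b) :
    ∃ F : γ → β, ∀ a, P a → f a = F (g a) :=
  have hfg : Function.FactorsThrough (fun a : Subtype P => f a) (fun a => g a) :=
    fun a b => h a b a.2 b.2
  ⟨Function.extend (fun a : Subtype P => g a) (fun a => f a) fun _ => Classical.arbitrary β,
    fun a ha => (hfg.extend_apply _ ⟨a, ha⟩).symm⟩

theorem Finset.val_map_eq_sum {ι α : Type*} (s : Finset ι) (f : ι → α) :
    s.val.map f = ∑ i ∈ s, {f i} := by
  rw [Finset.sum_eq_multiset_sum, ← Multiset.sum_map_singleton (s.val.map f), Multiset.map_map]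
  rfl

section ColoredGraph

variable {V : Type*} {G : SimpleGraph V} {vcol : V → ℕ} {ecol : Sym2 V → ℕ}

theorem EdgeRegular.exists_forall_adj_vcol_eq (her : EdgeRegular G vcol ecol) (c : ℕ) :
    ∃ κ : ℕ → ℕ, ∀ u p, vcol u = c → G.Adj u p → vcol p = κ (ecol s(u, p)) :=
  let ⟨κ, hκ⟩ := exists_eq_comp_of_factorsThrough_on
    (P := fun e : V × V => vcol e.1 = c ∧ G.Adj e.1 e.2)
    (f := fun e => vcol e.2) (g := fun e => ecol s(e.1, e.2))
    fun e e' he he' hee' => by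
      have hs := her e.1 e.2 e'.1 e'.2 he.2 he'.2 hee'
      rwa [he.1, he'.1, Sym2.congr_right] at hs
  ⟨κ, fun u p hu hup => hκ (u, p) ⟨hu, hup⟩⟩

variable [Fintype V]

variable (G ecol) in
noncomputable def triangleEdgeColors (u : V) : Multiset (ℕ × ℕ × ℕ) :=
  (Finset.univ.filter fun p : V × V => G.Adj u p.1 ∧ G.Adj u p.2 ∧ G.Adj p.1 p.2).val.map
    fun p => (ecol s(u, p.1), ecol s(u, p.2), ecol s(p.1, p.2))

theorem map_swapFirstTwo_triangleEdgeColors (u : V) :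
    (triangleEdgeColors G ecol u).map swapFirstTwo = triangleEdgeColors G ecol u := by
  rw [triangleEdgeColors, Multiset.map_map]
  set S := Finset.univ.filter fun p : V × V => G.Adj u p.1 ∧ G.Adj u p.2 ∧ G.Adj p.1 p.2
  have hS : S.map (Equiv.prodComm V V).toEmbedding = S := by
    ext ⟨p, q⟩
    simp only [S, Finset.mem_map_equiv, Finset.mem_filter, Finset.mem_univ, true_and,
      Equiv.prodComm_symm, Equiv.prodComm_apply, Prod.fst_swap, Prod.snd_swap, G.adj_comm q p]
    tauto
  conv_lhs => rw [← hS, Finset.map_val, Multiset.map_map]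
  refine Multiset.map_congr rfl fun x _ => ?_
  simp [swapFirstTwo, Sym2.eq_swap]

theorem map_unorderLast_triangleEdgeColors (u : V) :
    (triangleEdgeColors G ecol u).map unorderLast =
      ∑ p ∈ Finset.univ.filter (G.Adj u),
        (edgeTriangles G vcol ecol u p).map fun t => (ecol s(u, p), t.2) := by
  simp only [triangleEdgeColors, edgeTriangles, Multiset.map_map]
  simp only [Finset.val_map_eq_sum]
  rw [Finset.sum_finset_product _ (Finset.univ.filter (G.Adj u))
    fun p => Finset.univ.filter fun w => G.Adj u w ∧ G.Adj p w]
  · rfl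
  · intro x
    simp only [Finset.mem_filter, Finset.mem_univ, true_and]

theorem EdgeTriangleRegular.exists_forall_adj_edgeTriangles_eq
    (het : EdgeTriangleRegular G vcol ecol) :
    ∃ F : ℕ → Multiset (ℕ × Sym2 ℕ), ∀ i j, G.Adj i j →
      edgeTriangles G vcol ecol i j = F (ecol s(i, j)) :=
  let ⟨F, hF⟩ := exists_eq_comp_of_factorsThrough_on (P := fun e : V × V => G.Adj e.1 e.2)
    (f := fun e => edgeTriangles G vcol ecol e.1 e.2) (g := fun e => ecol s(e.1, e.2))
    fun e e' he he' hee' => het e.1 e.2 e'.1 e'.2 he he' hee'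
  ⟨F, fun i j hij => hF (i, j) hij⟩

theorem map_unorderLast_triangleEdgeColors_eq (hv : VertexRegular G vcol ecol)
    (het : EdgeTriangleRegular G vcol ecol) {u v : V} (huv : vcol u = vcol v) :
    (triangleEdgeColors G ecol u).map unorderLast =
      (triangleEdgeColors G ecol v).map unorderLast := by
  obtain ⟨F, hF⟩ := het.exists_forall_adj_edgeTriangles_eq
  have hstar : ∀ w, (triangleEdgeColors G ecol w).map unorderLast =
      ((vertexStar G ecol w).map fun α => (F α).map fun t => (α, t.2)).sum := by
    intro w
    rw [map_unorderLast_triangleEdgeColors (vcol := vcol), Finset.sum_eq_multiset_sum, vertexStar,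
      Multiset.map_map]
    refine congrArg Multiset.sum (Multiset.map_congr rfl fun p hp => ?_)
    rw [hF w p (Finset.mem_filter.1 (Finset.mem_def.2 hp)).2]
    rfl
  rw [hstar, hstar, hv u v huv]

theorem vertexTriangles_eq_map_triangleEdgeColors {κ : ℕ → ℕ} {c : ℕ}
    (hκ : ∀ u p, vcol u = c → G.Adj u p → vcol p = κ (ecol s(u, p)))
    {u : V} (hu : vcol u = c) :
    vertexTriangles G vcol ecol u = (triangleEdgeColors G ecol u).map
      fun t => (s((κ t.1, t.1), (κ t.2.1, t.2.1)), t.2.2) := by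
  rw [vertexTriangles, triangleEdgeColors, Multiset.map_map]
  refine Multiset.map_congr rfl fun x hx => ?_
  obtain ⟨hux1, hux2, -⟩ := (Finset.mem_filter.1 (Finset.mem_def.2 hx)).2
  simp only [Function.comp_apply, ← hκ u _ hu hux1, ← hκ u _ hu hux2]

end ColoredGraph

theorem triangleRegular_vertex_triangleRegular_general {V : Type*} [Fintype V]
    (G : SimpleGraph V) (vcol : V → ℕ) (ecol : Sym2 V → ℕ)
    (hreg : TriangleRegular G vcol ecol) :
    ∀ u v : V, vcol u = vcol v →
      vertexTriangles G vcol ecol u = vertexTriangles G vcol ecol v := by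
  obtain ⟨hv, her, het⟩ := hreg
  intro u v huv
  obtain ⟨κ, hκ⟩ := her.exists_forall_adj_vcol_eq (vcol u)
  rw [vertexTriangles_eq_map_triangleEdgeColors hκ rfl,
    vertexTriangles_eq_map_triangleEdgeColors hκ huv.symm,
    Multiset.eq_of_map_unorderLast_eq (map_swapFirstTwo_triangleEdgeColors u)
      (map_swapFirstTwo_triangleEdgeColors v) (map_unorderLast_triangleEdgeColors_eq hv het huv)]

/-- Lemma 2.11: a triangle-regular colored graph is vertex
triangle-regular. -/
theorem triangleRegular_vertex_triangleRegular {V : Type*} [Fintype V]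
    (G : SimpleGraph V) (vcol : V → ℕ) (ecol : Sym2 V → ℕ)
    (hdisj : ColorsDisjoint G vcol ecol)
    (hreg : TriangleRegular G vcol ecol) :
    ∀ u v : V, vcol u = vcol v →
      vertexTriangles G vcol ecol u = vertexTriangles G vcol ecol v :=
  triangleRegular_vertex_triangleRegular_general G vcol ecol hreg
end

section
/- Let J be an ideal in the polynomial ring ℝ[x_1,…,x_n]. Then J is generated by binomials (polynomials of the form x^α − x^β for monomials x^α, x^β) if and only if J has the following property: for every nonzero p ∈ J and every monomial x^α appearing with a nonzero coefficient in p, there exists another monomial x^β ≠ x^α appearing with a nonzero coefficient in p such that x^α − x^β ∈ J. -/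
open MvPolynomial SimpleGraph
open scoped Classical

namespace BinomAux

variable {n : ℕ}

def Rel (I : Ideal (MvPolynomial (Fin n) ℝ)) (a b : Fin n →₀ ℕ) : Prop :=
  monomial a (1:ℝ) - monomial b 1 ∈ I

def Bset (I : Ideal (MvPolynomial (Fin n) ℝ)) : Set (MvPolynomial (Fin n) ℝ) :=
  {q | (∃ a b, q = monomial a (1:ℝ) - monomial b 1) ∧ q ∈ I}

noncomputable def cs (I : Ideal (MvPolynomial (Fin n) ℝ)) (α : Fin n →₀ ℕ)
    (q : MvPolynomial (Fin n) ℝ) : ℝ :=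
  ∑ β ∈ q.support, if Rel I β α then coeff β q else 0

lemma cs_eq (I : Ideal (MvPolynomial (Fin n) ℝ)) (α : Fin n →₀ ℕ)
    (q : MvPolynomial (Fin n) ℝ) (t : Finset (Fin n →₀ ℕ)) (ht : q.support ⊆ t) :
    cs I α q = ∑ β ∈ t, if Rel I β α then coeff β q else 0 := by
  rw [cs]
  refine Finset.sum_subset ht (fun β _ hβ => ?_)
  have : coeff β q = 0 := MvPolynomial.notMem_support_iff.mp hβ
  simp [this]

lemma cs_add (I : Ideal (MvPolynomial (Fin n) ℝ)) (α : Fin n →₀ ℕ)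
    (q r : MvPolynomial (Fin n) ℝ) : cs I α (q + r) = cs I α q + cs I α r := by
  have h1 : (q + r).support ⊆ q.support ∪ r.support := MvPolynomial.support_add
  rw [cs_eq I α (q+r) _ h1, cs_eq I α q _ Finset.subset_union_left,
    cs_eq I α r _ Finset.subset_union_right, ← Finset.sum_add_distrib]
  refine Finset.sum_congr rfl (fun β _ => ?_)
  by_cases h : Rel I β α <;> simp [h, coeff_add]

lemma cs_smul (I : Ideal (MvPolynomial (Fin n) ℝ)) (α : Fin n →₀ ℕ)
    (c : ℝ) (q : MvPolynomial (Fin n) ℝ) : cs I α (c • q) = c * cs I α q := by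
  have h1 : (c • q).support ⊆ q.support := by
    intro β hβ
    rw [MvPolynomial.mem_support_iff] at hβ ⊢
    intro h; rw [MvPolynomial.coeff_smul, h, smul_zero] at hβ; exact hβ rfl
  rw [cs_eq I α (c • q) _ h1, cs, Finset.mul_sum]
  refine Finset.sum_congr rfl (fun β _ => ?_)
  by_cases h : Rel I β α <;> simp [h, MvPolynomial.coeff_smul]


lemma X_mul_mem_Bset (I : Ideal (MvPolynomial (Fin n) ℝ)) (i : Fin n)
    {q : MvPolynomial (Fin n) ℝ} (hq : q ∈ Bset I) : X i * q ∈ Bset I := by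
  obtain ⟨⟨a, b, rfl⟩, hqI⟩ := hq
  refine ⟨⟨Finsupp.single i 1 + a, Finsupp.single i 1 + b, ?_⟩, I.mul_mem_left _ hqI⟩
  rw [mul_sub]
  congr 1 <;> rw [X, monomial_mul, mul_one]

lemma X_mul_mem_span (I : Ideal (MvPolynomial (Fin n) ℝ)) (i : Fin n)
    {q : MvPolynomial (Fin n) ℝ} (hq : q ∈ Submodule.span ℝ (Bset I)) :
    X i * q ∈ Submodule.span ℝ (Bset I) := by
  induction hq using Submodule.span_induction with
  | mem x hx => exact Submodule.subset_span (X_mul_mem_Bset I i hx)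
  | zero => simpa using Submodule.zero_mem _
  | add a b _ _ iha ihb => rw [mul_add]; exact Submodule.add_mem _ iha ihb
  | smul c a _ iha => rw [mul_smul_comm]; exact Submodule.smul_mem _ c iha

lemma mul_mem_span (I : Ideal (MvPolynomial (Fin n) ℝ)) (f : MvPolynomial (Fin n) ℝ)
    {q : MvPolynomial (Fin n) ℝ} (hq : q ∈ Submodule.span ℝ (Bset I)) :
    f * q ∈ Submodule.span ℝ (Bset I) := by
  revert q
  induction f using MvPolynomial.induction_on with
  | C c => intro q hq; rw [C_mul']; exact Submodule.smul_mem _ c hq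
  | add f g ihf ihg =>
      intro q hq; rw [add_mul]; exact Submodule.add_mem _ (ihf hq) (ihg hq)
  | mul_X f i ihf =>
      intro q hq
      have h1 := X_mul_mem_span I i hq
      have h2 := ihf h1
      rwa [show f * (X i * q) = f * X i * q by ring] at h2

lemma span_le_spanB {S : Set (MvPolynomial (Fin n) ℝ)}
    (hS : ∀ s ∈ S, ∃ a b, s = monomial a (1:ℝ) - monomial b 1)
    {p : MvPolynomial (Fin n) ℝ} (hp : p ∈ Ideal.span S) :
    p ∈ Submodule.span ℝ (Bset (Ideal.span S)) := by
  induction hp using Submodule.span_induction with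
  | mem x hx => exact Submodule.subset_span ⟨hS x hx, Ideal.subset_span hx⟩
  | zero => exact Submodule.zero_mem _
  | add a b _ _ iha ihb => exact Submodule.add_mem _ iha ihb
  | smul c a _ iha => exact mul_mem_span _ c iha

lemma cs_eq_zero_of_mem_span (I : Ideal (MvPolynomial (Fin n) ℝ)) (α : Fin n →₀ ℕ)
    {q : MvPolynomial (Fin n) ℝ} (hq : q ∈ Submodule.span ℝ (Bset I)) :
    cs I α q = 0 := by
  induction hq using Submodule.span_induction with
  | mem x hx =>
      obtain ⟨⟨a, b, rfl⟩, hxI⟩ := hx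
      by_cases hab : a = b
      · subst hab; simp [cs]
      · have hiff : Rel I a α ↔ Rel I b α := by
          constructor <;> intro h
          · have := I.sub_mem h hxI
            have e : monomial a (1:ℝ) - monomial α 1 - (monomial a 1 - monomial b 1)
                = monomial b (1:ℝ) - monomial α 1 := by ring
            rwa [e] at this
          · have := I.add_mem hxI h
            have e : monomial a (1:ℝ) - monomial b 1 + (monomial b 1 - monomial α 1)
                = monomial a (1:ℝ) - monomial α 1 := by ring
            rwa [e] at this
        have hsupp : (monomial a (1:ℝ) - monomial b 1).support ⊆ {a, b} := by
          intro β hβ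
          rw [MvPolynomial.mem_support_iff] at hβ
          simp only [coeff_sub, coeff_monomial] at hβ
          by_contra hne
          simp only [Finset.mem_insert, Finset.mem_singleton, not_or] at hne
          rw [if_neg (fun h => hne.1 h.symm), if_neg (fun h => hne.2 h.symm)] at hβ
          simp at hβ
        rw [cs_eq I α _ _ hsupp, Finset.sum_pair hab]
        simp only [coeff_sub, coeff_monomial, if_pos rfl, if_neg hab,
          if_neg (Ne.symm hab)]
        by_cases h : Rel I a α
        · rw [if_pos h, if_pos (hiff.mp h)]; ring
        · rw [if_neg h, if_neg (fun h' => h (hiff.mpr h'))]; ring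
  | zero => simp [cs]
  | add a b _ _ iha ihb => rw [cs_add, iha, ihb, add_zero]
  | smul c a _ iha => rw [cs_smul, iha, mul_zero]

end BinomAux

/-- Lemma 4.1: an ideal J of ℝ[x₁,…,xₙ] is generated by binomials
iff for every nonzero p ∈ J and every monomial x^α with nonzero coefficient in p there
is another monomial x^β ≠ x^α with nonzero coefficient in p such that x^α - x^β ∈ J. -/
theorem binomial_ideal_characterization (n : ℕ) (J : Ideal (MvPolynomial (Fin n) ℝ)) :
    (∃ S : Set (MvPolynomial (Fin n) ℝ),
        (∀ p ∈ S, ∃ α β : Fin n →₀ ℕ, p = monomial α (1 : ℝ) - monomial β 1) ∧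
        J = Ideal.span S) ↔
      (∀ p ∈ J, p ≠ 0 → ∀ α : Fin n →₀ ℕ, MvPolynomial.coeff α p ≠ 0 →
        ∃ β : Fin n →₀ ℕ, β ≠ α ∧ MvPolynomial.coeff β p ≠ 0 ∧
          monomial α (1 : ℝ) - monomial β 1 ∈ J) := by
  constructor
  · rintro ⟨S, hSbin, rfl⟩ p hp hp0 α hα
    have hspan := BinomAux.span_le_spanB hSbin hp
    have hcs := BinomAux.cs_eq_zero_of_mem_span (Ideal.span S) α hspan
    by_contra hcon
    push_neg at hcon
    have hrefl : BinomAux.Rel (Ideal.span S) α α := by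
      unfold BinomAux.Rel; rw [sub_self]; exact Submodule.zero_mem _
    have hone : BinomAux.cs (Ideal.span S) α p = coeff α p := by
      rw [BinomAux.cs, Finset.sum_eq_single α]
      · rw [if_pos hrefl]
      · intro β hβ hne
        rw [if_neg]
        intro hrel
        refine hcon β hne (MvPolynomial.mem_support_iff.mp hβ) ?_
        have := Submodule.neg_mem _ hrel
        rwa [neg_sub] at this
      · intro hαs
        rw [MvPolynomial.notMem_support_iff.mp hαs, if_pos hrefl]
    exact hα (hone.symm.trans hcs)
  · intro h
    refine ⟨BinomAux.Bset J, fun q hq => hq.1, ?_⟩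
    have key : ∀ k (p : MvPolynomial (Fin n) ℝ), p ∈ J → p.support.card ≤ k →
        p ∈ Ideal.span (BinomAux.Bset J) := by
      intro k
      induction k with
      | zero =>
          intro p hp hcard
          have hp0 : p = 0 := by
            rw [← MvPolynomial.support_eq_empty]
            exact Finset.card_eq_zero.mp (Nat.le_zero.mp hcard)
          rw [hp0]; exact Submodule.zero_mem _
      | succ k ih =>
          intro p hp hcard
          by_cases hp0 : p = 0
          · rw [hp0]; exact Submodule.zero_mem _
          · have hne : p.support.Nonempty := by
              rw [Finset.nonempty_iff_ne_empty]
              intro hemp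
              exact hp0 (MvPolynomial.support_eq_empty.mp hemp)
            obtain ⟨α, hαs⟩ := hne
            have hα : coeff α p ≠ 0 := MvPolynomial.mem_support_iff.mp hαs
            obtain ⟨β, hβne, hβc, hbin⟩ := h p hp hp0 α hα
            set b : MvPolynomial (Fin n) ℝ := monomial α (1 : ℝ) - monomial β 1 with hb
            set c : ℝ := coeff α p with hc
            have hbS : b ∈ Ideal.span (BinomAux.Bset J) :=
              Ideal.subset_span ⟨⟨α, β, rfl⟩, hbin⟩
            have hp' : p - C c * b ∈ J := J.sub_mem hp (J.mul_mem_left _ hbin)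
            have hcoeff : ∀ γ, coeff γ (p - C c * b)
                = coeff γ p - c * (if α = γ then 1 else 0) + c * (if β = γ then 1 else 0) := by
              intro γ
              simp only [hb, coeff_sub, coeff_C_mul, mul_sub, coeff_monomial]
              ring
            have hsupp : (p - C c * b).support ⊆ p.support.erase α := by
              intro γ hγ
              rw [MvPolynomial.mem_support_iff] at hγ
              rw [Finset.mem_erase]
              have hγα : γ ≠ α := by
                rintro rfl
                apply hγ
                rw [hcoeff, if_pos rfl, if_neg hβne, ← hc]
                ring
              refine ⟨hγα, ?_⟩
              by_contra hγs
              apply hγ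
              rw [hcoeff, MvPolynomial.notMem_support_iff.mp hγs,
                if_neg (fun h' => hγα h'.symm), if_neg (fun h' => ?_)]
              · ring
              · subst h'
                exact hβc (MvPolynomial.notMem_support_iff.mp hγs)
            have hcard' : (p - C c * b).support.card ≤ k := by
              calc (p - C c * b).support.card ≤ (p.support.erase α).card :=
                    Finset.card_le_card hsupp
                _ = p.support.card - 1 := Finset.card_erase_of_mem hαs
                _ ≤ k := by omega
            have hmem := ih (p - C c * b) hp' hcard'
            have : p = (p - C c * b) + C c * b := by ring
            rw [this]
            exact Submodule.add_mem _ hmem (Ideal.mul_mem_left _ _ hbS)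
    refine le_antisymm (fun p hp => key p.support.card p hp le_rfl) ?_
    rw [Ideal.span_le]
    exact fun q hq => hq.2
end

section
/- Let G be a connected colored block graph whose set of vertex colors is disjoint from its set of edge colors. If G is not vertex-regular, then the vanishing ideal I_G is not generated by binomials. -/
open MvPolynomial SimpleGraph
open scoped Classical

/-- The entry of a matrix at an unordered pair of indices (for symmetric
matrices this is just the corresponding entry). -/
noncomputable def sym2Entry {n : ℕ} (M : Matrix (Fin n) (Fin n) ℝ) : Sym2 (Fin n) → ℝ :=
  Sym2.lift ⟨fun i j => (M i j + M j i) / 2, fun i j => by dsimp only; rw [add_comm]⟩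

/-- The linear space 𝓛_G of symmetric matrices attached to a colored graph. -/
def colSpace {n : ℕ} (G : SimpleGraph (Fin n)) (vcol : Fin n → ℕ) (ecol : Sym2 (Fin n) → ℕ) :
    Set (Matrix (Fin n) (Fin n) ℝ) :=
  { K | K.IsSymm ∧
        (∀ i j, i ≠ j → ¬ G.Adj i j → K i j = 0) ∧
        (∀ i j, vcol i = vcol j → K i i = K j j) ∧
        (∀ i j i' j', G.Adj i j → G.Adj i' j' → ecol s(i, j) = ecol s(i', j') →
          K i j = K i' j') }

/-- The vanishing ideal I_G of the model: all polynomials in the variables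
σ_{ij} = σ_{ji} vanishing at K⁻¹ for every invertible K ∈ 𝓛_G. -/
noncomputable def gaussianIdeal {n : ℕ} (G : SimpleGraph (Fin n)) (vcol : Fin n → ℕ)
    (ecol : Sym2 (Fin n) → ℕ) : Ideal (MvPolynomial (Sym2 (Fin n)) ℝ) :=
  ⨅ K ∈ {K : Matrix (Fin n) (Fin n) ℝ | K ∈ colSpace G vcol ecol ∧ IsUnit K.det},
    RingHom.ker (MvPolynomial.eval (sym2Entry K⁻¹))

/-- An ideal is binomial if it is generated by differences of two monomials. -/
def IsBinomialIdeal {σ : Type*} (I : Ideal (MvPolynomial σ ℝ)) : Prop :=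
  ∃ S : Set (MvPolynomial σ ℝ),
    (∀ p ∈ S, ∃ α β : σ →₀ ℕ, p = monomial α (1 : ℝ) - monomial β 1) ∧
    I = Ideal.span S


section Aux

open Filter Topology

/-- If binomials vanish at two points, they vanish at the coordinatewise product. -/
lemma hadamard_ker {σ : Type*} (S : Set (MvPolynomial σ ℝ))
    (hS : ∀ p ∈ S, ∃ α β : σ →₀ ℕ, p = monomial α (1 : ℝ) - monomial β 1)
    (x y : σ → ℝ)
    (hx : Ideal.span S ≤ RingHom.ker (MvPolynomial.eval x))
    (hy : Ideal.span S ≤ RingHom.ker (MvPolynomial.eval y)) :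
    Ideal.span S ≤ RingHom.ker (MvPolynomial.eval (fun e => x e * y e)) := by
  rw [Ideal.span_le]
  intro p hp
  obtain ⟨α, β, rfl⟩ := hS p hp
  have hx' : MvPolynomial.eval x (monomial α (1:ℝ) - monomial β 1) = 0 :=
    hx (Ideal.subset_span hp)
  have hy' : MvPolynomial.eval y (monomial α (1:ℝ) - monomial β 1) = 0 :=
    hy (Ideal.subset_span hp)
  simp only [map_sub, eval_monomial, one_mul, sub_eq_zero] at hx' hy'
  have hmul : ∀ z w : σ → ℝ, ∀ γ : σ →₀ ℕ,
      (γ.prod fun i k => (z i * w i) ^ k) =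
        (γ.prod fun i k => z i ^ k) * (γ.prod fun i k => w i ^ k) := by
    intro z w γ
    rw [Finsupp.prod, Finsupp.prod, Finsupp.prod, ← Finset.prod_mul_distrib]
    exact Finset.prod_congr rfl fun i _ => mul_pow _ _ _
  rw [SetLike.mem_coe, RingHom.mem_ker, map_sub, eval_monomial, eval_monomial,
    one_mul, one_mul, sub_eq_zero, hmul, hmul, hx', hy']

/-- The generic symmetric matrix of variables. -/
noncomputable def genSym (n : ℕ) : Matrix (Fin n) (Fin n) (MvPolynomial (Sym2 (Fin n)) ℝ) :=
  Matrix.of fun i j => MvPolynomial.X s(i, j)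

lemma eval_genSym_adj {n : ℕ} (x : Sym2 (Fin n) → ℝ) (i j : Fin n) :
    MvPolynomial.eval x ((genSym n).adjugate i j) =
      (Matrix.of fun a b => x s(a, b)).adjugate i j := by
  have h := (MvPolynomial.eval x : MvPolynomial (Sym2 (Fin n)) ℝ →+* ℝ).map_adjugate (genSym n)
  have h2 : (MvPolynomial.eval x : MvPolynomial (Sym2 (Fin n)) ℝ →+* ℝ).mapMatrix (genSym n) =
      Matrix.of fun a b => x s(a, b) := by
    ext a b
    simp [genSym, RingHom.mapMatrix_apply, Matrix.map_apply]
  have h3 : MvPolynomial.eval x ((genSym n).adjugate i j) =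
      ((MvPolynomial.eval x : MvPolynomial (Sym2 (Fin n)) ℝ →+* ℝ).mapMatrix
        ((genSym n).adjugate)) i j := rfl
  rw [h3, h, h2]

lemma sym2Entry_of_isSymm {n : ℕ} {M : Matrix (Fin n) (Fin n) ℝ} (h : M.IsSymm) (i j : Fin n) :
    sym2Entry M s(i, j) = M i j := by
  have hji : M j i = M i j := by
    conv_lhs => rw [← h]
    rfl
  show (M i j + M j i) / 2 = M i j
  rw [hji]
  ring

/-- The adjugate-difference polynomial lies in the Gaussian ideal whenever the two
vertices have the same color. -/
lemma adj_diff_mem_gaussianIdeal {n : ℕ} (G : SimpleGraph (Fin n)) (vcol : Fin n → ℕ)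
    (ecol : Sym2 (Fin n) → ℕ) (u v : Fin n) (huv : vcol u = vcol v) :
    (genSym n).adjugate u u - (genSym n).adjugate v v ∈ gaussianIdeal G vcol ecol := by
  refine Ideal.mem_iInf.mpr fun K => Ideal.mem_iInf.mpr fun hK => ?_
  obtain ⟨⟨hsym, _, hdiag, _⟩, hdet⟩ := hK
  rw [RingHom.mem_ker, map_sub, eval_genSym_adj, eval_genSym_adj]
  have hKinvsym : (K⁻¹).IsSymm := by
    rw [Matrix.IsSymm, Matrix.transpose_nonsing_inv, hsym.eq]
  have hM : (Matrix.of fun a b => sym2Entry K⁻¹ s(a, b)) = K⁻¹ := by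
    ext a b
    exact sym2Entry_of_isSymm hKinvsym a b
  rw [hM]
  have hdetinv : (K⁻¹).det ≠ 0 := by
    rw [Matrix.det_nonsing_inv, Ring.inverse_eq_inv']
    exact inv_ne_zero (IsUnit.ne_zero hdet)
  have hadj : (K⁻¹).adjugate = (K⁻¹).det • K := by
    have h1 := Matrix.inv_def (K⁻¹)
    rw [Matrix.nonsing_inv_nonsing_inv K hdet, Ring.inverse_eq_inv'] at h1
    calc (K⁻¹).adjugate = (K⁻¹).det • ((K⁻¹).det⁻¹ • (K⁻¹).adjugate) := by
          rw [smul_smul, mul_inv_cancel₀ hdetinv, one_smul]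
      _ = (K⁻¹).det • K := by rw [← h1]
  rw [hadj, Matrix.smul_apply, Matrix.smul_apply, hdiag u v huv, sub_self]

/-- Key analytic step: if the `uu` and `vv` entries of `(1 + tA)⁻¹` agree for all small
nonzero `t`, then `(A²)_{uu} = (A²)_{vv}` (assuming the diagonal of `A` vanishes at `u, v`). -/
lemma key_limit {n : ℕ} (A : Matrix (Fin n) (Fin n) ℝ) (u v : Fin n)
    (hAu : A u u = 0) (hAv : A v v = 0)
    (h : ∀ᶠ t in 𝓝[≠] (0:ℝ), ((1 + t • A)⁻¹) u u = ((1 + t • A)⁻¹) v v) :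
    (A * A) u u = (A * A) v v := by
  set K : ℝ → Matrix (Fin n) (Fin n) ℝ := fun t => 1 + t • A with hKdef
  have hKcont : Continuous K := by
    apply Continuous.add continuous_const
    exact continuous_id.smul continuous_const
  have hK0 : K 0 = 1 := by simp [hKdef]
  have hdet : Tendsto (fun t => (K t).det) (𝓝 0) (𝓝 1) := by
    have hc := hKcont.matrix_det
    have := hc.tendsto 0
    simpa [hK0] using this
  have hdetne : ∀ᶠ t in 𝓝[≠] (0:ℝ), (K t).det ≠ 0 :=
    (hdet.mono_left nhdsWithin_le_nhds).eventually_ne one_ne_zero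
  -- expansion of the inverse
  have hexp : ∀ t : ℝ, (K t).det ≠ 0 →
      (K t)⁻¹ = 1 - t • A + (t ^ 2) • (A * A) - (t ^ 3) • ((K t)⁻¹ * (A * (A * A))) := by
    intro t ht
    have hu : IsUnit (K t).det := isUnit_iff_ne_zero.mpr ht
    refine Matrix.inv_eq_right_inv ?_
    have h1 : K t * ((K t)⁻¹ * (A * (A * A))) = A * (A * A) := by
      rw [← Matrix.mul_assoc, Matrix.mul_nonsing_inv _ hu, Matrix.one_mul]
    have h2 : K t * (1 - t • A + (t ^ 2) • (A * A)) = 1 + (t ^ 3) • (A * (A * A)) := by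
      show (1 + t • A) * (1 - t • A + (t ^ 2) • (A * A)) = 1 + (t ^ 3) • (A * (A * A))
      simp only [mul_add, mul_sub, add_mul, sub_mul, mul_one, one_mul, Matrix.mul_smul,
        Matrix.smul_mul, Matrix.mul_assoc]
      module
    calc K t * (1 - t • A + (t ^ 2) • (A * A) - (t ^ 3) • ((K t)⁻¹ * (A * (A * A))))
        = K t * (1 - t • A + (t ^ 2) • (A * A)) - K t * ((t ^ 3) • ((K t)⁻¹ * (A * (A * A)))) := by
          rw [Matrix.mul_sub]
      _ = 1 + (t ^ 3) • (A * (A * A)) - (t ^ 3) • (A * (A * A)) := by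
          rw [h2, Matrix.mul_smul, h1]
      _ = 1 := by abel
  -- entrywise consequence
  have hentry : ∀ᶠ t in 𝓝[≠] (0:ℝ),
      (A * A) u u - (A * A) v v =
        t * (((K t)⁻¹ * (A * (A * A))) u u - ((K t)⁻¹ * (A * (A * A))) v v) := by
    filter_upwards [hdetne, h, self_mem_nhdsWithin] with t ht heq htne
    have e := hexp t ht
    set N := (K t)⁻¹ * (A * (A * A)) with hN
    have eu : (K t)⁻¹ u u =
        1 - t * A u u + t ^ 2 * (A * A) u u - t ^ 3 * N u u := by
      conv_lhs => rw [e]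
      simp [Matrix.sub_apply, Matrix.add_apply, Matrix.smul_apply, Matrix.one_apply_eq,
        smul_eq_mul]
    have ev : (K t)⁻¹ v v =
        1 - t * A v v + t ^ 2 * (A * A) v v - t ^ 3 * N v v := by
      conv_lhs => rw [e]
      simp [Matrix.sub_apply, Matrix.add_apply, Matrix.smul_apply, Matrix.one_apply_eq,
        smul_eq_mul]
    have htne' : t ≠ 0 := by simpa using htne
    have heq' : (K t)⁻¹ u u = (K t)⁻¹ v v := heq
    rw [eu, ev, hAu, hAv] at heq'
    have key : t ^ 2 * ((A * A) u u - (A * A) v v) =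
        t ^ 2 * (t * (N u u - N v v)) := by linear_combination heq'
    exact mul_left_cancel₀ (pow_ne_zero 2 htne') key
  -- the right-hand side tends to 0
  have hNu : ∀ w : Fin n, Tendsto
      (fun t => ((K t).adjugate * (A * (A * A))) w w) (𝓝 0) (𝓝 ((A * (A * A)) w w)) := by
    intro w
    have hc : Continuous fun t => ((K t).adjugate * (A * (A * A))) w w :=
      (hKcont.matrix_adjugate.matrix_mul continuous_const).matrix_elem w w
    have := hc.tendsto 0
    simpa [hK0] using this
  have hrw : ∀ t : ℝ, ∀ w : Fin n, ((K t)⁻¹ * (A * (A * A))) w w =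
      Ring.inverse (K t).det * (((K t).adjugate * (A * (A * A))) w w) := by
    intro t w
    rw [Matrix.inv_def, Matrix.smul_mul, Matrix.smul_apply, smul_eq_mul]
  have hR : Tendsto
      (fun t => t * (((K t)⁻¹ * (A * (A * A))) u u - ((K t)⁻¹ * (A * (A * A))) v v))
      (𝓝[≠] (0:ℝ)) (𝓝 0) := by
    have h1 : Tendsto
        (fun t => t * (Ring.inverse (K t).det *
          ((((K t).adjugate * (A * (A * A))) u u) - (((K t).adjugate * (A * (A * A))) v v))))
        (𝓝 (0:ℝ)) (𝓝 0) := by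
      have hinv : Tendsto (fun t => Ring.inverse (K t).det) (𝓝 (0:ℝ)) (𝓝 1) := by
        rw [Ring.inverse_eq_inv']
        have := hdet.inv₀ one_ne_zero
        simpa using this
      have hid : Tendsto (fun t : ℝ => t) (𝓝 (0:ℝ)) (𝓝 (0:ℝ)) := tendsto_id
      have hmul : Tendsto
          (fun t : ℝ => t * (Ring.inverse (K t).det *
            ((((K t).adjugate * (A * (A * A))) u u) - (((K t).adjugate * (A * (A * A))) v v))))
          (𝓝 (0:ℝ)) (𝓝 (0 * (1 * (((A * (A * A)) u u) - ((A * (A * A)) v v))))) :=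
        hid.mul (hinv.mul ((hNu u).sub (hNu v)))
      simpa using hmul
    have h2 := h1.mono_left (nhdsWithin_le_nhds (s := {(0:ℝ)}ᶜ))
    refine h2.congr fun t => ?_
    rw [hrw t u, hrw t v]
    ring
  have hconst : Tendsto (fun _ : ℝ => (A * A) u u - (A * A) v v) (𝓝[≠] (0:ℝ)) (𝓝 0) :=
    Tendsto.congr' (hentry.mono fun t ht => ht.symm) hR
  have h0 : (A * A) u u - (A * A) v v = 0 :=
    tendsto_nhds_unique tendsto_const_nhds hconst
  linarith

/-- Indicator matrix of the edges of a given color. -/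
noncomputable def edgeInd {n : ℕ} (G : SimpleGraph (Fin n)) (ecol : Sym2 (Fin n) → ℕ) (d : ℕ) :
    Matrix (Fin n) (Fin n) ℝ :=
  Matrix.of fun i j => if G.Adj i j ∧ ecol s(i, j) = d then 1 else 0

lemma edgeInd_diag {n : ℕ} (G : SimpleGraph (Fin n)) (ecol : Sym2 (Fin n) → ℕ) (d : ℕ)
    (i : Fin n) : edgeInd G ecol d i i = 0 := by
  simp [edgeInd]

lemma edgeInd_isSymm {n : ℕ} (G : SimpleGraph (Fin n)) (ecol : Sym2 (Fin n) → ℕ) (d : ℕ) :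
    (edgeInd G ecol d).IsSymm := by
  ext i j
  simp only [Matrix.transpose_apply, edgeInd, Matrix.of_apply]
  rw [Sym2.eq_swap, G.adj_comm]

lemma edgeInd_sq {n : ℕ} (G : SimpleGraph (Fin n)) (ecol : Sym2 (Fin n) → ℕ) (d : ℕ)
    (u : Fin n) :
    ((edgeInd G ecol d) * (edgeInd G ecol d)) u u =
      (Multiset.count d (vertexStar G ecol u) : ℝ) := by
  rw [Matrix.mul_apply]
  have h1 : ∀ w : Fin n, edgeInd G ecol d u w * edgeInd G ecol d w u
      = if (G.Adj u w ∧ d = ecol s(u, w)) then (1:ℝ) else 0 := by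
    intro w
    simp only [edgeInd, Matrix.of_apply]
    by_cases h : G.Adj u w ∧ ecol s(u, w) = d
    · rw [if_pos h, if_pos ⟨h.1.symm, by rw [Sym2.eq_swap]; exact h.2⟩, if_pos ⟨h.1, h.2.symm⟩,
        one_mul]
    · rw [if_neg h, zero_mul, if_neg (fun hc => h ⟨hc.1, hc.2.symm⟩)]
  rw [Finset.sum_congr rfl (fun w _ => h1 w), Finset.sum_boole]
  norm_cast
  rw [vertexStar, Multiset.count_map]
  show (Finset.univ.filter fun w => G.Adj u w ∧ d = ecol s(u, w)).card
      = Multiset.card ((Finset.univ.filter fun w => G.Adj u w).val.filter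
          fun w => d = ecol s(u, w))
  rw [← Finset.filter_val, Finset.filter_filter]
  rfl


end Aux

open Filter Topology in
/-- Proposition 4.4: if a connected colored block graph is not
vertex-regular, then I_G is not generated by binomials. -/
theorem not_vertexRegular_not_binomial {n : ℕ} (G : SimpleGraph (Fin n))
    (vcol : Fin n → ℕ) (ecol : Sym2 (Fin n) → ℕ)
    (hconn : G.Connected) (hdisj : ColorsDisjoint G vcol ecol)
    (hblock : IsBlockGraph G) (hnv : ¬ VertexRegular G vcol ecol) :
    ¬ IsBinomialIdeal (gaussianIdeal G vcol ecol) := by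
  intro hbin
  obtain ⟨S, hSbin, hspan⟩ := hbin
  rw [VertexRegular] at hnv
  push_neg at hnv
  obtain ⟨u, v, hcol, hstar⟩ := hnv
  have hdex : ∃ d : ℕ,
      Multiset.count d (vertexStar G ecol u) ≠ Multiset.count d (vertexStar G ecol v) := by
    by_contra hc
    push_neg at hc
    exact hstar (Multiset.ext.mpr hc)
  obtain ⟨d, hd⟩ := hdex
  set A := edgeInd G ecol d with hA
  have hAsymm : A.IsSymm := edgeInd_isSymm G ecol d
  -- membership of the perturbed matrices in the linear space
  have hKcol : ∀ t : ℝ, ((1 : Matrix (Fin n) (Fin n) ℝ) + t • A) ∈ colSpace G vcol ecol := by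
    intro t
    refine ⟨?_, ?_, ?_, ?_⟩
    · rw [Matrix.IsSymm, Matrix.transpose_add, Matrix.transpose_one, Matrix.transpose_smul,
        hAsymm.eq]
    · intro i j hne hnadj
      rw [Matrix.add_apply, Matrix.smul_apply, Matrix.one_apply_ne hne, smul_eq_mul]
      have : A i j = 0 := by
        simp only [hA, edgeInd, Matrix.of_apply]
        rw [if_neg (fun hc => hnadj hc.1)]
      rw [this, mul_zero, add_zero]
    · intro i j _
      rw [Matrix.add_apply, Matrix.add_apply, Matrix.smul_apply, Matrix.smul_apply,
        Matrix.one_apply_eq, Matrix.one_apply_eq, hA, edgeInd_diag, edgeInd_diag]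
    · intro i j i' j' hij hij' hec
      rw [Matrix.add_apply, Matrix.add_apply, Matrix.smul_apply, Matrix.smul_apply,
        Matrix.one_apply_ne hij.ne, Matrix.one_apply_ne hij'.ne]
      have : A i j = A i' j' := by
        simp only [hA, edgeInd, Matrix.of_apply]
        by_cases hcd : ecol s(i, j) = d
        · rw [if_pos ⟨hij, hcd⟩, if_pos ⟨hij', by rw [← hec]; exact hcd⟩]
        · rw [if_neg (fun hc => hcd hc.2), if_neg (fun hc => hcd (by rw [hec]; exact hc.2))]
      rw [this]
  have h1col : (1 : Matrix (Fin n) (Fin n) ℝ) ∈ colSpace G vcol ecol := by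
    refine ⟨Matrix.isSymm_one, ?_, ?_, ?_⟩
    · intro i j hne _
      exact Matrix.one_apply_ne hne
    · intro i j _
      rw [Matrix.one_apply_eq, Matrix.one_apply_eq]
    · intro i j i' j' hij hij' _
      rw [Matrix.one_apply_ne hij.ne, Matrix.one_apply_ne hij'.ne]
  have hle : ∀ M : Matrix (Fin n) (Fin n) ℝ, M ∈ colSpace G vcol ecol → IsUnit M.det →
      gaussianIdeal G vcol ecol ≤ RingHom.ker (MvPolynomial.eval (sym2Entry M⁻¹)) := by
    intro M h1 h2
    exact iInf₂_le M ⟨h1, h2⟩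
  have hy0 : gaussianIdeal G vcol ecol ≤
      RingHom.ker (MvPolynomial.eval (sym2Entry (1 : Matrix (Fin n) (Fin n) ℝ))) := by
    have h := hle 1 h1col (by simp)
    rwa [inv_one] at h
  have hF := adj_diff_mem_gaussianIdeal G vcol ecol u v hcol
  -- main pointwise statement
  have hmain : ∀ t : ℝ, IsUnit ((1 : Matrix (Fin n) (Fin n) ℝ) + t • A).det →
      (∀ w : Fin n, (((1 : Matrix (Fin n) (Fin n) ℝ) + t • A)⁻¹) w w ≠ 0) →
      (((1 : Matrix (Fin n) (Fin n) ℝ) + t • A)⁻¹) u u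
        = (((1 : Matrix (Fin n) (Fin n) ℝ) + t • A)⁻¹) v v := by
    intro t hdet hne
    set Kt : Matrix (Fin n) (Fin n) ℝ := 1 + t • A with hKt
    set z : Sym2 (Fin n) → ℝ :=
      fun e => sym2Entry Kt⁻¹ e * sym2Entry (1 : Matrix (Fin n) (Fin n) ℝ) e with hzdef
    have hx := hle Kt (hKcol t) hdet
    have hz : gaussianIdeal G vcol ecol ≤ RingHom.ker (MvPolynomial.eval z) := by
      rw [hspan]
      exact hadamard_ker S hSbin _ _ (hspan ▸ hx) (hspan ▸ hy0)
    have h0 : MvPolynomial.eval z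
        ((genSym n).adjugate u u - (genSym n).adjugate v v) = 0 := hz hF
    rw [map_sub, eval_genSym_adj, eval_genSym_adj, sub_eq_zero] at h0
    have hMz : (Matrix.of fun a b => z s(a, b))
        = Matrix.diagonal (fun w => Kt⁻¹ w w) := by
      ext a b
      by_cases hab : a = b
      · subst hab
        rw [Matrix.of_apply, Matrix.diagonal_apply_eq]
        show sym2Entry Kt⁻¹ s(a, a) * sym2Entry (1 : Matrix (Fin n) (Fin n) ℝ) s(a, a)
          = Kt⁻¹ a a
        show (Kt⁻¹ a a + Kt⁻¹ a a) / 2 *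
          (((1 : Matrix (Fin n) (Fin n) ℝ) a a + (1 : Matrix (Fin n) (Fin n) ℝ) a a) / 2)
            = Kt⁻¹ a a
        rw [Matrix.one_apply_eq]
        ring
      · rw [Matrix.of_apply, Matrix.diagonal_apply_ne _ hab]
        show sym2Entry Kt⁻¹ s(a, b) * sym2Entry (1 : Matrix (Fin n) (Fin n) ℝ) s(a, b) = 0
        show (Kt⁻¹ a b + Kt⁻¹ b a) / 2 *
          (((1 : Matrix (Fin n) (Fin n) ℝ) a b + (1 : Matrix (Fin n) (Fin n) ℝ) b a) / 2) = 0
        rw [Matrix.one_apply_ne hab, Matrix.one_apply_ne (Ne.symm hab)]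
        ring
    rw [hMz, Matrix.adjugate_diagonal, Matrix.diagonal_apply_eq, Matrix.diagonal_apply_eq] at h0
    have hP : (∏ w ∈ Finset.univ.erase u, Kt⁻¹ w w) ≠ 0 :=
      Finset.prod_ne_zero_iff.mpr fun w _ => hne w
    have h1 := Finset.prod_erase_mul Finset.univ (fun w => Kt⁻¹ w w) (Finset.mem_univ u)
    have h2 := Finset.prod_erase_mul Finset.univ (fun w => Kt⁻¹ w w) (Finset.mem_univ v)
    have h3 : (∏ w ∈ Finset.univ.erase u, Kt⁻¹ w w) * Kt⁻¹ u u
        = (∏ w ∈ Finset.univ.erase u, Kt⁻¹ w w) * Kt⁻¹ v v := by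
      rw [h1, h0, h2]
    exact mul_left_cancel₀ hP h3
  -- analysis: the hypotheses of `hmain` hold for all small nonzero `t`
  have hKcont : Continuous fun t : ℝ => (1 : Matrix (Fin n) (Fin n) ℝ) + t • A :=
    Continuous.add continuous_const (continuous_id.smul continuous_const)
  have hK0 : (1 : Matrix (Fin n) (Fin n) ℝ) + (0:ℝ) • A = 1 := by simp
  have hdet : Tendsto (fun t : ℝ => ((1 : Matrix (Fin n) (Fin n) ℝ) + t • A).det)
      (𝓝 0) (𝓝 1) := by
    have := hKcont.matrix_det.tendsto 0
    simpa [hK0] using this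
  have hdetne : ∀ᶠ t in 𝓝 (0:ℝ), ((1 : Matrix (Fin n) (Fin n) ℝ) + t • A).det ≠ 0 :=
    hdet.eventually_ne one_ne_zero
  have hinv : Tendsto (fun t : ℝ =>
      Ring.inverse ((1 : Matrix (Fin n) (Fin n) ℝ) + t • A).det) (𝓝 0) (𝓝 1) := by
    rw [Ring.inverse_eq_inv']
    have := hdet.inv₀ one_ne_zero
    simpa using this
  have hne : ∀ᶠ t in 𝓝 (0:ℝ), ∀ w : Fin n,
      (((1 : Matrix (Fin n) (Fin n) ℝ) + t • A)⁻¹) w w ≠ 0 := by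
    rw [eventually_all]
    intro w
    have hadjc : Tendsto (fun t : ℝ =>
        ((1 : Matrix (Fin n) (Fin n) ℝ) + t • A).adjugate w w) (𝓝 0) (𝓝 1) := by
      have := (hKcont.matrix_adjugate.matrix_elem w w).tendsto 0
      simpa [hK0] using this
    have hg : Tendsto (fun t : ℝ =>
        Ring.inverse ((1 : Matrix (Fin n) (Fin n) ℝ) + t • A).det *
          ((1 : Matrix (Fin n) (Fin n) ℝ) + t • A).adjugate w w) (𝓝 0) (𝓝 1) := by
      have := hinv.mul hadjc
      simpa using this
    have := hg.eventually_ne one_ne_zero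
    refine this.mono fun t ht => ?_
    rwa [Matrix.inv_def, Matrix.smul_apply, smul_eq_mul]
  have hev : ∀ᶠ t in 𝓝[≠] (0:ℝ),
      (((1 : Matrix (Fin n) (Fin n) ℝ) + t • A)⁻¹) u u
        = (((1 : Matrix (Fin n) (Fin n) ℝ) + t • A)⁻¹) v v := by
    filter_upwards [hdetne.filter_mono nhdsWithin_le_nhds,
      hne.filter_mono nhdsWithin_le_nhds] with t h1 h2
    exact hmain t (isUnit_iff_ne_zero.mpr h1) h2
  have hAA := key_limit A u v (edgeInd_diag G ecol d u) (edgeInd_diag G ecol d v) hev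
  rw [edgeInd_sq, edgeInd_sq] at hAA
  exact hd (Nat.cast_injective hAA)
end

section
/- Let 𝒢 be a colored complete graph on vertex set {1,…,n} (with vertex colors disjoint from edge colors) that is triangle-regular. Then the linear space 𝓛_𝒢 is closed under matrix squaring: for every K ∈ 𝓛_𝒢, also K² ∈ 𝓛_𝒢. Consequently 𝓛_𝒢 is a Jordan subalgebra of the space of real symmetric n×n matrices, i.e., it is also closed under the Jordan product (A,B) ↦ (AB + BA)/2. -/
open MvPolynomial SimpleGraph
open scoped Classical

section AuxJordan

variable {n : ℕ}

/-- The common value of `K` on edges of a given color (junk if no such edge). -/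
noncomputable def eVal (ecol : Sym2 (Fin n) → ℕ) (K : Matrix (Fin n) (Fin n) ℝ) (c : ℕ) : ℝ :=
  if h : ∃ p : Fin n × Fin n, p.1 ≠ p.2 ∧ ecol s(p.1, p.2) = c then K h.choose.1 h.choose.2
  else 0

/-- The common value of `K` on diagonal entries of a given vertex color. -/
noncomputable def vVal (vcol : Fin n → ℕ) (K : Matrix (Fin n) (Fin n) ℝ) (c : ℕ) : ℝ :=
  if h : ∃ v : Fin n, vcol v = c then K h.choose h.choose else 0

lemma eVal_eq (ecol : Sym2 (Fin n) → ℕ) (K : Matrix (Fin n) (Fin n) ℝ)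
    (hedge : ∀ i j i' j' : Fin n, (⊤ : SimpleGraph (Fin n)).Adj i j →
      (⊤ : SimpleGraph (Fin n)).Adj i' j' → ecol s(i, j) = ecol s(i', j') → K i j = K i' j')
    {i j : Fin n} (hij : i ≠ j) : eVal ecol K (ecol s(i, j)) = K i j := by
  have h : ∃ p : Fin n × Fin n, p.1 ≠ p.2 ∧ ecol s(p.1, p.2) = ecol s(i, j) :=
    ⟨(i, j), hij, rfl⟩
  rw [eVal, dif_pos h]
  exact hedge _ _ _ _ ((SimpleGraph.top_adj _ _).mpr h.choose_spec.1) ((SimpleGraph.top_adj _ _).mpr hij)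
    h.choose_spec.2

lemma vVal_eq (vcol : Fin n → ℕ) (K : Matrix (Fin n) (Fin n) ℝ)
    (hdiag : ∀ i j : Fin n, vcol i = vcol j → K i i = K j j)
    (v : Fin n) : vVal vcol K (vcol v) = K v v := by
  have h : ∃ w : Fin n, vcol w = vcol v := ⟨v, rfl⟩
  rw [vVal, dif_pos h]
  exact hdiag _ _ h.choose_spec

lemma colSpace_sq_mem (vcol : Fin n → ℕ) (ecol : Sym2 (Fin n) → ℕ)
    (hreg : TriangleRegular (⊤ : SimpleGraph (Fin n)) vcol ecol)
    (K : Matrix (Fin n) (Fin n) ℝ) (hK : K ∈ colSpace (⊤ : SimpleGraph (Fin n)) vcol ecol) :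
    K * K ∈ colSpace (⊤ : SimpleGraph (Fin n)) vcol ecol := by
  obtain ⟨hvreg, hereg, htreg⟩ := hreg
  obtain ⟨hsym, -, hdiag, hedge⟩ := hK
  have hKsymm : ∀ i j : Fin n, K i j = K j i := fun i j => (hsym.apply j i)
  have he : ∀ {i j : Fin n}, i ≠ j → eVal ecol K (ecol s(i, j)) = K i j :=
    fun hij => eVal_eq ecol K hedge hij
  have hv : ∀ v : Fin n, vVal vcol K (vcol v) = K v v := vVal_eq vcol K hdiag
  -- the diagonal sum written as a multiset sum over the vertex star
  have diagSum : ∀ i : Fin n, (K * K) i i =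
      K i i * K i i + ((vertexStar (⊤ : SimpleGraph (Fin n)) ecol i).map
        (fun c => eVal ecol K c * eVal ecol K c)).sum := by
    intro i
    rw [Matrix.mul_apply]
    rw [← Finset.add_sum_erase _ _ (Finset.mem_univ i)]
    congr 1
    have hset : Finset.univ.erase i =
        Finset.univ.filter fun w => (⊤ : SimpleGraph (Fin n)).Adj i w := by
      ext w; simp [ne_comm]
    rw [hset, vertexStar, Multiset.map_map, Finset.sum]
    refine congrArg Multiset.sum (Multiset.map_congr (Finset.val_inj.mpr (by ext w; simp)) ?_)
    intro w hw
    simp only [Finset.mem_val, Finset.mem_filter, SimpleGraph.top_adj] at hw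
    have hiw : i ≠ w := hw.2
    simp only [Function.comp_apply]
    rw [he hiw, hKsymm w i]
  -- the off-diagonal sum written via edgeTriangles
  have offSum : ∀ i j : Fin n, i ≠ j → (K * K) i j =
      K i j * (vVal vcol K (vcol i) + vVal vcol K (vcol j)) +
      ((edgeTriangles (⊤ : SimpleGraph (Fin n)) vcol ecol i j).map
        (fun p => Sym2.lift ⟨fun a b => eVal ecol K a * eVal ecol K b,
          fun a b => mul_comm _ _⟩ p.2)).sum := by
    intro i j hij
    rw [Matrix.mul_apply]
    rw [← Finset.add_sum_erase _ _ (Finset.mem_univ i)]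
    have hjmem : j ∈ Finset.univ.erase i := by simp [Ne.symm hij]
    rw [← Finset.add_sum_erase _ _ hjmem]
    have hset : (Finset.univ.erase i).erase j =
        Finset.univ.filter fun w =>
          (⊤ : SimpleGraph (Fin n)).Adj i w ∧ (⊤ : SimpleGraph (Fin n)).Adj j w := by
      ext w; simp [ne_comm]; tauto
    have hmsum : ∑ w ∈ (Finset.univ.erase i).erase j, K i w * K w j =
        ((edgeTriangles (⊤ : SimpleGraph (Fin n)) vcol ecol i j).map
          (fun p => Sym2.lift ⟨fun a b => eVal ecol K a * eVal ecol K b,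
            fun a b => mul_comm _ _⟩ p.2)).sum := by
      rw [hset, edgeTriangles, Multiset.map_map, Finset.sum]
      refine congrArg Multiset.sum (Multiset.map_congr (Finset.val_inj.mpr (by ext w; simp)) ?_)
      intro w hw
      simp only [Finset.mem_val, Finset.mem_filter, SimpleGraph.top_adj] at hw
      have hiw : i ≠ w := hw.2.1
      have hjw : j ≠ w := hw.2.2
      simp only [Function.comp_apply, Sym2.lift_mk]
      rw [he hiw, he hjw, hKsymm w j]
    rw [hmsum, hv, hv]
    ring
  refine ⟨?_, ?_, ?_, ?_⟩
  · exact (Matrix.transpose_mul K K).trans (by rw [hsym.eq])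
  · intro i j hne hadj
    exact absurd ((SimpleGraph.top_adj _ _).mpr hne) hadj
  · intro i j hcol
    rw [diagSum i, diagSum j, hdiag i j hcol, hvreg i j hcol]
  · intro i j i' j' hadj hadj' hecol
    have hij : i ≠ j := (SimpleGraph.top_adj _ _).mp hadj
    have hij' : i' ≠ j' := (SimpleGraph.top_adj _ _).mp hadj'
    rw [offSum i j hij, offSum i' j' hij']
    have h1 : K i j = K i' j' := hedge _ _ _ _ hadj hadj' hecol
    have h2 : vVal vcol K (vcol i) + vVal vcol K (vcol j) =
        vVal vcol K (vcol i') + vVal vcol K (vcol j') := by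
      have := hereg _ _ _ _ hadj hadj' hecol
      rw [Sym2.eq_iff] at this
      rcases this with ⟨ha, hb⟩ | ⟨ha, hb⟩ <;> rw [ha, hb]
      exact add_comm _ _
    have h3 := htreg _ _ _ _ hadj hadj' hecol
    rw [h1, h2, h3]

lemma colSpace_add_mem {G : SimpleGraph (Fin n)} {vcol : Fin n → ℕ} {ecol : Sym2 (Fin n) → ℕ}
    {A B : Matrix (Fin n) (Fin n) ℝ} (hA : A ∈ colSpace G vcol ecol)
    (hB : B ∈ colSpace G vcol ecol) : A + B ∈ colSpace G vcol ecol := by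
  obtain ⟨hA1, hA2, hA3, hA4⟩ := hA
  obtain ⟨hB1, hB2, hB3, hB4⟩ := hB
  refine ⟨hA1.add hB1, ?_, ?_, ?_⟩
  · intro i j h1 h2; simp [Matrix.add_apply, hA2 i j h1 h2, hB2 i j h1 h2]
  · intro i j h; simp [Matrix.add_apply, hA3 i j h, hB3 i j h]
  · intro i j i' j' h1 h2 h3
    simp [Matrix.add_apply, hA4 i j i' j' h1 h2 h3, hB4 i j i' j' h1 h2 h3]

lemma colSpace_smul_mem {G : SimpleGraph (Fin n)} {vcol : Fin n → ℕ} {ecol : Sym2 (Fin n) → ℕ}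
    {A : Matrix (Fin n) (Fin n) ℝ} (c : ℝ) (hA : A ∈ colSpace G vcol ecol) :
    c • A ∈ colSpace G vcol ecol := by
  obtain ⟨hA1, hA2, hA3, hA4⟩ := hA
  refine ⟨hA1.smul c, ?_, ?_, ?_⟩
  · intro i j h1 h2; simp [Matrix.smul_apply, hA2 i j h1 h2]
  · intro i j h; simp [Matrix.smul_apply, hA3 i j h]
  · intro i j i' j' h1 h2 h3; simp [Matrix.smul_apply, hA4 i j i' j' h1 h2 h3]

end AuxJordan

/-- Proposition 6.4: for a complete triangle-regular colored graph,
𝓛_𝒢 is closed under squaring, hence a Jordan subalgebra of the symmetric matrices. -/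
theorem colSpace_jordan_subalgebra {n : ℕ}
    (vcol : Fin n → ℕ) (ecol : Sym2 (Fin n) → ℕ)
    (hdisj : ColorsDisjoint (⊤ : SimpleGraph (Fin n)) vcol ecol)
    (hreg : TriangleRegular (⊤ : SimpleGraph (Fin n)) vcol ecol) :
    (∀ K ∈ colSpace (⊤ : SimpleGraph (Fin n)) vcol ecol,
        K * K ∈ colSpace (⊤ : SimpleGraph (Fin n)) vcol ecol) ∧
    (∀ A ∈ colSpace (⊤ : SimpleGraph (Fin n)) vcol ecol,
      ∀ B ∈ colSpace (⊤ : SimpleGraph (Fin n)) vcol ecol,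
        ((1 : ℝ) / 2) • (A * B + B * A) ∈ colSpace (⊤ : SimpleGraph (Fin n)) vcol ecol) := by
  have sq := colSpace_sq_mem vcol ecol hreg
  refine ⟨sq, ?_⟩
  intro A hA B hB
  have key : A * B + B * A =
      (A + B) * (A + B) + ((-1 : ℝ) • (A * A) + (-1 : ℝ) • (B * B)) := by
    rw [add_mul, mul_add, mul_add]
    simp only [neg_smul, one_smul]
    abel
  rw [key]
  exact colSpace_smul_mem _ (colSpace_add_mem (sq _ (colSpace_add_mem hA hB))
    (colSpace_add_mem (colSpace_smul_mem _ (sq _ hA)) (colSpace_smul_mem _ (sq _ hB))))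
end
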